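/- arXiv:0812.4076 — 4 statements merged into one kernel-verified Lean document; each statement's English description precedes it below -/
import Mathlib

section
/- Let X, h : Z⁺ → ℝ^{2k} be smooth functions satisfying X_s + J₀X_t = h, and let 0 < d < 1/2. Assume sup_{t∈S¹} e^{ds}|D^γ h(s,t)| → 0 as s → +∞ for every multi-index γ, sup_{t∈S¹}|X(s,t)| → 0 as s → +∞, and ∫₀¹ X(s,t) dt = 0 for every s ≥ 0. Then e^{ds}(∫₀¹ |X(s,t)|² dt)^{1/2} → 0 as s → +∞. -/
open Filter Set

noncomputable section

/-- `ℝ^{2k}`, regarded as `ℝ^k ⊕ ℝ^k` with the Euclidean norm. -/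
abbrev EV (k : ℕ) := EuclideanSpace ℝ (Fin k ⊕ Fin k)

/-- The standard complex structure `J₀ = [[0, -I],[I, 0]]` on `ℝ^{2k}`. -/
def J0 (k : ℕ) : Matrix (Fin k ⊕ Fin k) (Fin k ⊕ Fin k) ℝ :=
  Matrix.fromBlocks 0 (-1) 1 0

/-- Action of a `2k × 2k` real matrix on `ℝ^{2k}`. -/
def matAct {k : ℕ} (A : Matrix (Fin k ⊕ Fin k) (Fin k ⊕ Fin k) ℝ) (v : EV k) : EV k :=
  (EuclideanSpace.equiv (Fin k ⊕ Fin k) ℝ).symm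
    (A.mulVec (EuclideanSpace.equiv (Fin k ⊕ Fin k) ℝ v))

/-- Partial derivative in the first (cylinder) variable `s`. -/
def pS {E : Type*} [NormedAddCommGroup E] [NormedSpace ℝ E] (f : ℝ → ℝ → E) : ℝ → ℝ → E :=
  fun s t => deriv (fun s' => f s' t) s

/-- Partial derivative in the second (angular) variable `t`. -/
def pT {E : Type*} [NormedAddCommGroup E] [NormedSpace ℝ E] (f : ℝ → ℝ → E) : ℝ → ℝ → E :=
  fun s t => deriv (fun t' => f s t') t

/-- The mixed partial derivative `D^γ = ∂_s^{γ₁} ∂_t^{γ₂}` for `γ = (γ₁, γ₂)`. -/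
def Dmix {E : Type*} [NormedAddCommGroup E] [NormedSpace ℝ E] (g₁ g₂ : ℕ) (f : ℝ → ℝ → E) :
    ℝ → ℝ → E :=
  (pS (E := E))^[g₁] ((pT (E := E))^[g₂] f)

/-- `sup_{t ∈ S¹} e^{d·s} ‖g(s,t)‖ → 0` as `s → +∞`. -/
def UnifDecay {E : Type*} [NormedAddCommGroup E] (d : ℝ) (g : ℝ → ℝ → E) : Prop :=
  ∀ ε > 0, ∃ s₀ : ℝ, ∀ s ≥ s₀, ∀ t : ℝ, Real.exp (d * s) * ‖g s t‖ < ε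

/-- `C^n` smoothness on the half cylinder `Z⁺ = [0,∞) × ℝ` (periodicity in `t` is
imposed separately). -/
def SmoothOnZ {E : Type*} [NormedAddCommGroup E] [NormedSpace ℝ E] (n : ℕ∞) (f : ℝ → ℝ → E) :
    Prop :=
  ContDiffOn ℝ n (fun p : ℝ × ℝ => f p.1 p.2) (Ici (0 : ℝ) ×ˢ univ)

/-! Write `y(s) = ∫₀¹ |X(s,t)|² dt`. Differentiating twice in `s` and replacing `X_ss` by
`∂ₛh - J₀ ∂ₜ∂ₛX` (the equation differentiated in `s`), an integration by parts over the circle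
gives `y'' = 2 ∫ (|X_s|² + |X_t|² + ⟨X, ∂ₛh⟩ + ⟨X_t, J₀h⟩)`. Since `X` has mean zero, the Poincaré
inequality `∫ |X|² ≤ ∫ |X_t|²` and Young's inequality turn this into `y'' ≥ κ y - o(e^{-2ds})` with
`κ = (1 + 4d²)/2 > 4d²`. As `y → 0`, a maximum principle compares `y` with
`A e^{-√κ s} + B e^{-2ds}` for arbitrarily small `B`, so `e^{2ds} y → 0`. -/

open MeasureTheory Function Real
open scoped RealInnerProductSpace ContDiff Topology

section ComplexStructure

variable {k : ℕ}

/-- `J0CLM k v` is definitionally `matAct (J0 k) v`. -/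
abbrev J0CLM (k : ℕ) : EV k →L[ℝ] EV k :=
  Matrix.toEuclideanCLM (n := Fin k ⊕ Fin k) (𝕜 := ℝ) (J0 k)

lemma J0_mul_J0 : J0 k * J0 k = -1 := by
  rw [J0, Matrix.fromBlocks_multiply, ← Matrix.fromBlocks_one, Matrix.fromBlocks_neg]
  simp

lemma star_J0 : star (J0 k) = -J0 k := by
  rw [Matrix.star_eq_conjTranspose, Matrix.conjTranspose_eq_transpose_of_trivial, J0,
    Matrix.fromBlocks_transpose, Matrix.fromBlocks_neg]
  simp

lemma J0CLM_J0CLM (v : EV k) : J0CLM k (J0CLM k v) = -v := by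
  change (J0CLM k * J0CLM k) v = -v
  rw [← map_mul, J0_mul_J0, map_neg, map_one]
  rfl

lemma norm_J0CLM (v : EV k) : ‖J0CLM k v‖ = ‖v‖ := by
  have h : ⟪J0CLM k v, J0CLM k v⟫ = ⟪v, v⟫ := by
    rw [← ContinuousLinearMap.adjoint_inner_left, ← ContinuousLinearMap.star_eq_adjoint,
      ← map_star, star_J0]
    change ⟪(Matrix.toEuclideanCLM (n := Fin k ⊕ Fin k) (𝕜 := ℝ) (-J0 k) * J0CLM k) v, v⟫ = _
    rw [← map_mul, neg_mul, J0_mul_J0, neg_neg, map_one]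
    rfl
  rw [real_inner_self_eq_norm_sq, real_inner_self_eq_norm_sq] at h
  exact (pow_left_inj₀ (norm_nonneg _) (norm_nonneg _) two_ne_zero).1 h

end ComplexStructure

section Partials

variable {E : Type*} [NormedAddCommGroup E] [NormedSpace ℝ E] {U : Set (ℝ × ℝ)} {f : ℝ → ℝ → E}
  {s t : ℝ}

lemma hasDerivAt_pS_fderiv (hU : IsOpen U) (hf : ContDiffOn ℝ ∞ (uncurry f) U)
    (hst : (s, t) ∈ U) : HasDerivAt (fun s' => f s' t) (fderiv ℝ (uncurry f) (s, t) (1, 0)) s := by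
  have hd := ((hf.contDiffAt (hU.mem_nhds hst)).differentiableAt (by simp)).hasFDerivAt
  exact hd.comp_hasDerivAt s ((hasDerivAt_id s).prodMk (hasDerivAt_const s t))

lemma hasDerivAt_pT_fderiv (hU : IsOpen U) (hf : ContDiffOn ℝ ∞ (uncurry f) U)
    (hst : (s, t) ∈ U) : HasDerivAt (f s) (fderiv ℝ (uncurry f) (s, t) (0, 1)) t := by
  have hd := ((hf.contDiffAt (hU.mem_nhds hst)).differentiableAt (by simp)).hasFDerivAt
  exact hd.comp_hasDerivAt t ((hasDerivAt_const t s).prodMk (hasDerivAt_id t))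

lemma pS_eq_fderiv (hU : IsOpen U) (hf : ContDiffOn ℝ ∞ (uncurry f) U) (hst : (s, t) ∈ U) :
    pS f s t = fderiv ℝ (uncurry f) (s, t) (1, 0) :=
  (hasDerivAt_pS_fderiv hU hf hst).deriv

lemma pT_eq_fderiv (hU : IsOpen U) (hf : ContDiffOn ℝ ∞ (uncurry f) U) (hst : (s, t) ∈ U) :
    pT f s t = fderiv ℝ (uncurry f) (s, t) (0, 1) :=
  (hasDerivAt_pT_fderiv hU hf hst).deriv

lemma hasDerivAt_pS (hU : IsOpen U) (hf : ContDiffOn ℝ ∞ (uncurry f) U) (hst : (s, t) ∈ U) :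
    HasDerivAt (fun s' => f s' t) (pS f s t) s :=
  pS_eq_fderiv hU hf hst ▸ hasDerivAt_pS_fderiv hU hf hst

lemma hasDerivAt_pT (hU : IsOpen U) (hf : ContDiffOn ℝ ∞ (uncurry f) U) (hst : (s, t) ∈ U) :
    HasDerivAt (f s) (pT f s t) t :=
  pT_eq_fderiv hU hf hst ▸ hasDerivAt_pT_fderiv hU hf hst

lemma contDiffOn_fderiv_apply (hU : IsOpen U) (hf : ContDiffOn ℝ ∞ (uncurry f) U) (v : ℝ × ℝ) :
    ContDiffOn ℝ ∞ (fun p => fderiv ℝ (uncurry f) p v) U :=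
  ((contDiffOn_infty_iff_fderiv_of_isOpen hU).1 hf).2.clm_apply contDiffOn_const

lemma contDiffOn_pS (hU : IsOpen U) (hf : ContDiffOn ℝ ∞ (uncurry f) U) :
    ContDiffOn ℝ ∞ (uncurry (pS f)) U :=
  (contDiffOn_fderiv_apply hU hf (1, 0)).congr fun _ hp => pS_eq_fderiv hU hf hp

lemma contDiffOn_pT (hU : IsOpen U) (hf : ContDiffOn ℝ ∞ (uncurry f) U) :
    ContDiffOn ℝ ∞ (uncurry (pT f)) U :=
  (contDiffOn_fderiv_apply hU hf (0, 1)).congr fun _ hp => pT_eq_fderiv hU hf hp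

lemma pT_pS (hU : IsOpen U) (hf : ContDiffOn ℝ ∞ (uncurry f) U) (hst : (s, t) ∈ U) :
    pT (pS f) s t = pS (pT f) s t := by
  have hF' : DifferentiableAt ℝ (fderiv ℝ (uncurry f)) (s, t) :=
    (((contDiffOn_infty_iff_fderiv_of_isOpen hU).1 hf).2.contDiffAt
      (hU.mem_nhds hst)).differentiableAt (by simp)
  have hdir : ∀ v w : ℝ × ℝ, fderiv ℝ (fun p => fderiv ℝ (uncurry f) p v) (s, t) w
      = fderiv ℝ (fderiv ℝ (uncurry f)) (s, t) w v := fun v w => by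
    rw [fderiv_clm_apply hF' (differentiableAt_const v)]
    simp
  have eqS : uncurry (pS f) =ᶠ[𝓝 (s, t)] fun p => fderiv ℝ (uncurry f) p (1, 0) := by
    filter_upwards [hU.mem_nhds hst] with p hp using pS_eq_fderiv hU hf hp
  have eqT : uncurry (pT f) =ᶠ[𝓝 (s, t)] fun p => fderiv ℝ (uncurry f) p (0, 1) := by
    filter_upwards [hU.mem_nhds hst] with p hp using pT_eq_fderiv hU hf hp
  rw [pT_eq_fderiv hU (contDiffOn_pS hU hf) hst, pS_eq_fderiv hU (contDiffOn_pT hU hf) hst,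
    eqS.fderiv_eq, eqT.fderiv_eq, hdir, hdir]
  exact (hf.contDiffAt (hU.mem_nhds hst)).isSymmSndFDerivAt
    (by simp only [minSmoothness_of_isRCLikeNormedField]; exact WithTop.coe_le_coe.2 le_top) _ _

lemma continuous_slice {S : Set ℝ} (hS : IsOpen S) (hf : ContDiffOn ℝ ∞ (uncurry f) (S ×ˢ univ))
    (hs : s ∈ S) : Continuous (f s) :=
  continuous_iff_continuousAt.2 fun t =>
    (hasDerivAt_pT (hS.prod isOpen_univ) hf (mk_mem_prod hs (mem_univ t))).continuousAt

end Partials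

lemma hasDerivAt_intervalIntegral_of_continuousOn {E : Type*} [NormedAddCommGroup E]
    [NormedSpace ℝ E] {S : Set ℝ} (hS : IsOpen S) {G G' : ℝ → ℝ → E}
    (hG : ∀ s ∈ S, Continuous (G s)) (hG' : ContinuousOn (uncurry G') (S ×ˢ univ))
    (hd : ∀ s ∈ S, ∀ t, HasDerivAt (fun s' => G s' t) (G' s t) s) {s : ℝ} (hs : s ∈ S)
    (a b : ℝ) :
    HasDerivAt (fun s => ∫ t in a..b, G s t) (∫ t in a..b, G' s t) s := by
  obtain ⟨r, hr, hrS⟩ := Metric.nhds_basis_closedBall.mem_iff.1 (hS.mem_nhds hs)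
  obtain ⟨C, hC⟩ := (isCompact_closedBall s r |>.prod isCompact_uIcc).exists_bound_of_continuousOn
    (hG'.mono (prod_mono hrS (subset_univ (uIcc a b))))
  have hG's : Continuous (G' s) :=
    hG'.comp_continuous (continuous_const.prodMk continuous_id) fun t => ⟨hs, mem_univ t⟩
  refine (intervalIntegral.hasDerivAt_integral_of_dominated_loc_of_deriv_le (bound := fun _ => C)
    (Metric.ball_mem_nhds s hr) ?_ ((hG s hs).intervalIntegrable a b)
    hG's.aestronglyMeasurable ?_ intervalIntegrable_const ?_).2
  · filter_upwards [hS.mem_nhds hs] with x hx using (hG x hx).aestronglyMeasurable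
  · refine Eventually.of_forall fun t ht x hx => hC (x, t) ⟨Metric.ball_subset_closedBall hx, ?_⟩
    exact uIoc_subset_uIcc ht
  · exact Eventually.of_forall fun t _ x hx => hd x (hrS (Metric.ball_subset_closedBall hx)) t

section IntegralInner

variable {F : Type*} [NormedAddCommGroup F] [InnerProductSpace ℝ F] {S : Set ℝ} {f g : ℝ → ℝ → F}
  {s : ℝ}

lemma hasDerivAt_integral_inner (hS : IsOpen S) (hf : ContDiffOn ℝ ∞ (uncurry f) (S ×ˢ univ))
    (hg : ContDiffOn ℝ ∞ (uncurry g) (S ×ˢ univ)) (hs : s ∈ S) :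
    HasDerivAt (fun s => ∫ t in (0:ℝ)..1, ⟪f s t, g s t⟫)
      (∫ t in (0:ℝ)..1, (⟪f s t, pS g s t⟫ + ⟪pS f s t, g s t⟫)) s := by
  have hU : IsOpen (S ×ˢ (univ : Set ℝ)) := hS.prod isOpen_univ
  refine hasDerivAt_intervalIntegral_of_continuousOn hS
    (fun s hs => (continuous_slice hS hf hs).inner (continuous_slice hS hg hs))
    ((hf.continuousOn.inner (contDiffOn_pS hU hg).continuousOn).add
      ((contDiffOn_pS hU hf).continuousOn.inner hg.continuousOn))
    (fun s hs t => (hasDerivAt_pS hU hf (mk_mem_prod hs (mem_univ t))).inner ℝ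
      (hasDerivAt_pS hU hg (mk_mem_prod hs (mem_univ t))))
    hs 0 1

lemma hasDerivAt_integral_norm_sq (hS : IsOpen S) (hf : ContDiffOn ℝ ∞ (uncurry f) (S ×ˢ univ))
    (hs : s ∈ S) :
    HasDerivAt (fun s => ∫ t in (0:ℝ)..1, ‖f s t‖ ^ 2)
      (2 * ∫ t in (0:ℝ)..1, ⟪f s t, pS f s t⟫) s := by
  simp_rw [← real_inner_self_eq_norm_sq, ← intervalIntegral.integral_const_mul]
  refine (hasDerivAt_integral_inner hS hf hf hs).congr_deriv
    (intervalIntegral.integral_congr fun t _ => ?_)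
  simp only [real_inner_comm (pS f s t)]
  ring

lemma hasDerivAt_integral_inner_pS (hS : IsOpen S) (hf : ContDiffOn ℝ ∞ (uncurry f) (S ×ˢ univ))
    (hs : s ∈ S) :
    HasDerivAt (fun s => ∫ t in (0:ℝ)..1, ⟪f s t, pS f s t⟫)
      (∫ t in (0:ℝ)..1, (⟪f s t, pS (pS f) s t⟫ + ‖pS f s t‖ ^ 2)) s := by
  simp_rw [← real_inner_self_eq_norm_sq]
  exact hasDerivAt_integral_inner hS hf (contDiffOn_pS (hS.prod isOpen_univ) hf) hs

end IntegralInner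

section Poincare

variable {F : Type*} [NormedAddCommGroup F] [InnerProductSpace ℝ F] [CompleteSpace F]
  {u u' : ℝ → F}

lemma sq_intervalIntegral_le {f : ℝ → ℝ} (hf : Continuous f) :
    (∫ x in (0:ℝ)..1, f x) ^ 2 ≤ ∫ x in (0:ℝ)..1, f x ^ 2 := by
  set M := ∫ x in (0:ℝ)..1, f x
  have hint : ∀ g : ℝ → ℝ, Continuous g → IntervalIntegrable g volume 0 1 :=
    fun g hg => hg.intervalIntegrable 0 1
  have expand : ∫ x in (0:ℝ)..1, (f x - M) ^ 2 = (∫ x in (0:ℝ)..1, f x ^ 2) - M ^ 2 := by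
    have : ∀ x, (f x - M) ^ 2 = (f x ^ 2 - 2 * M * f x) + M ^ 2 := fun x => by ring
    simp_rw [this]
    rw [intervalIntegral.integral_add (hint _ (by fun_prop)) intervalIntegrable_const,
      intervalIntegral.integral_sub (hint _ (by fun_prop)) (hint _ (by fun_prop)),
      intervalIntegral.integral_const_mul]
    simp only [intervalIntegral.integral_const, sub_zero, smul_eq_mul, one_mul]
    ring
  have : 0 ≤ ∫ x in (0:ℝ)..1, (f x - M) ^ 2 :=
    intervalIntegral.integral_nonneg zero_le_one fun x _ => sq_nonneg (f x - M)
  linarith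

lemma norm_sub_le_integral_norm_deriv (hu : ∀ t, HasDerivAt u (u' t) t) (hu' : Continuous u')
    {r t : ℝ} (hr : r ∈ Icc (0:ℝ) 1) (ht : t ∈ Icc (0:ℝ) 1) :
    ‖u t - u r‖ ≤ ∫ x in (0:ℝ)..1, ‖u' x‖ := by
  wlog hrt : r ≤ t generalizing r t
  · rw [norm_sub_rev]; exact this ht hr (le_of_not_ge hrt)
  rw [← intervalIntegral.integral_eq_sub_of_hasDerivAt (fun x _ => hu x)
    (hu'.intervalIntegrable r t)]
  exact (intervalIntegral.norm_integral_le_integral_norm hrt).trans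
    (intervalIntegral.integral_mono_interval hr.1 hrt ht.2
      (Eventually.of_forall fun x => norm_nonneg _) (hu'.norm.intervalIntegrable 0 1))

lemma norm_le_integral_norm_deriv (hu : ∀ t, HasDerivAt u (u' t) t) (hu' : Continuous u')
    (hmean : ∫ t in (0:ℝ)..1, u t = 0) {t : ℝ} (ht : t ∈ Icc (0:ℝ) 1) :
    ‖u t‖ ≤ ∫ x in (0:ℝ)..1, ‖u' x‖ := by
  have hcont : Continuous u := continuous_iff_continuousAt.2 fun t => (hu t).continuousAt
  have hrep : u t = ∫ r in (0:ℝ)..1, (u t - u r) := by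
    rw [intervalIntegral.integral_sub intervalIntegrable_const (hcont.intervalIntegrable 0 1),
      hmean]
    simp
  rw [hrep]
  have hbound : ∀ r ∈ uIoc (0:ℝ) 1, ‖u t - u r‖ ≤ ∫ x in (0:ℝ)..1, ‖u' x‖ := fun r hr =>
    norm_sub_le_integral_norm_deriv hu hu'
      (Ioc_subset_Icc_self (by rwa [uIoc_of_le zero_le_one] at hr)) ht
  simpa using intervalIntegral.norm_integral_le_of_norm_le_const hbound

lemma integral_norm_sq_le_integral_norm_deriv_sq (hu : ∀ t, HasDerivAt u (u' t) t)
    (hu' : Continuous u') (hmean : ∫ t in (0:ℝ)..1, u t = 0) :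
    ∫ t in (0:ℝ)..1, ‖u t‖ ^ 2 ≤ ∫ t in (0:ℝ)..1, ‖u' t‖ ^ 2 := by
  have hcont : Continuous u := continuous_iff_continuousAt.2 fun t => (hu t).continuousAt
  calc ∫ t in (0:ℝ)..1, ‖u t‖ ^ 2
      ≤ ∫ t in (0:ℝ)..1, (∫ x in (0:ℝ)..1, ‖u' x‖) ^ 2 :=
        intervalIntegral.integral_mono_on zero_le_one ((hcont.norm.pow 2).intervalIntegrable 0 1)
          intervalIntegrable_const fun t ht =>
            pow_le_pow_left₀ (norm_nonneg _) (norm_le_integral_norm_deriv hu hu' hmean ht) 2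
    _ = (∫ x in (0:ℝ)..1, ‖u' x‖) ^ 2 := by simp
    _ ≤ ∫ t in (0:ℝ)..1, ‖u' t‖ ^ 2 := sq_intervalIntegral_le hu'.norm

end Poincare

lemma neg_le_two_mul_inner {F : Type*} [NormedAddCommGroup F] [InnerProductSpace ℝ F] {a : ℝ}
    (ha : 0 < a) (x y : F) : -(a * ‖x‖ ^ 2 + ‖y‖ ^ 2 / a) ≤ 2 * ⟪x, y⟫ := by
  have h : 0 ≤ ‖a • x + y‖ ^ 2 / a := by positivity
  rw [norm_add_sq_real, norm_smul, inner_smul_left, Real.norm_of_nonneg ha.le] at h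
  have : (a * ‖x‖) ^ 2 / a = a * ‖x‖ ^ 2 := by field_simp
  have : 2 * (a * ⟪x, y⟫) / a = 2 * ⟪x, y⟫ := by field_simp
  simp only [conj_trivial] at h
  rw [add_div, add_div] at h
  linarith

section Comparison

variable {a c : ℝ} {f f' : ℝ → ℝ}

lemma hasDerivAt_exp_mul (c x : ℝ) :
    HasDerivAt (fun s => exp (c * s)) (c * exp (c * x)) x :=
  ((hasDerivAt_id' x).const_mul c).exp.congr_deriv (by ring)

lemma tendsto_exp_neg_mul_atTop (hc : 0 < c) : Tendsto (fun s => exp (-c * s)) atTop (𝓝 0) := by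
  simpa [comp_def] using tendsto_exp_neg_atTop_nhds_zero.comp (tendsto_id.const_mul_atTop hc)

lemma monotoneOn_Ici_of_hasDerivAt_nonneg (hf : ∀ x ≥ a, HasDerivAt f (f' x) x)
    (hf' : ∀ x ≥ a, 0 ≤ f' x) : MonotoneOn f (Ici a) := by
  refine monotoneOn_of_hasDerivWithinAt_nonneg (f' := f') (convex_Ici a)
    (fun x hx => (hf x hx).continuousAt.continuousWithinAt) (fun x hx => ?_) (fun x hx => ?_)
  all_goals rw [interior_Ici] at hx
  exacts [(hf x hx.le).hasDerivWithinAt, hf' x hx.le]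

lemma monotoneOn_exp_mul_of_mul_le_deriv (hf : ∀ x ≥ a, HasDerivAt f (f' x) x)
    (hle : ∀ x ≥ a, c * f x ≤ f' x) : MonotoneOn (fun x => exp (-c * x) * f x) (Ici a) :=
  monotoneOn_Ici_of_hasDerivAt_nonneg (fun x hx => (hasDerivAt_exp_mul (-c) x).mul (hf x hx))
    fun x hx => by nlinarith [exp_pos (-c * x), hle x hx]

lemma tendsto_atTop_of_one_le_deriv (hf : ∀ x ≥ a, HasDerivAt f (f' x) x)
    (h1 : ∀ x ≥ a, 1 ≤ f' x) : Tendsto f atTop atTop := by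
  have hmono : MonotoneOn (fun x => f x - x) (Ici a) :=
    monotoneOn_Ici_of_hasDerivAt_nonneg (fun x hx => (hf x hx).sub (hasDerivAt_id x))
      fun x hx => sub_nonneg.2 (h1 x hx)
  refine tendsto_atTop_mono' atTop ?_ (tendsto_atTop_add_const_left atTop (f a - a) tendsto_id)
  filter_upwards [eventually_ge_atTop a] with x hx
  show f a - a + x ≤ f x
  linarith [hmono self_mem_Ici hx hx]

/-- If `w' + c w` were positive somewhere, it would grow like `e^{cs}` and force `w → ∞`; so
`w' + c w ≤ 0`, i.e. `e^{cs} w` is nonincreasing. -/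
lemma nonpos_of_sq_mul_le_deriv2 (hc : 0 < c) {w w' w'' : ℝ → ℝ}
    (hw : ∀ s ≥ a, HasDerivAt w (w' s) s) (hw' : ∀ s ≥ a, HasDerivAt w' (w'' s) s)
    (hineq : ∀ s ≥ a, c ^ 2 * w s ≤ w'' s) (ha : w a ≤ 0) (hlim : Tendsto w atTop (𝓝 0)) :
    ∀ s ≥ a, w s ≤ 0 := by
  have hp : ∀ σ ≥ a, w' σ + c * w σ ≤ 0 := by
    intro σ hσ
    by_contra! hpos
    have hmono := monotoneOn_exp_mul_of_mul_le_deriv (a := σ) (c := c)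
      (f := fun s => w' s + c * w s) (f' := fun s => w'' s + c * w' s)
      (fun s hs => (hw' s (hσ.trans hs)).add ((hw s (hσ.trans hs)).const_mul c))
      fun s hs => by nlinarith [hineq s (hσ.trans hs)]
    set L := exp (-c * σ) * (w' σ + c * w σ)
    have hL : 0 < L := mul_pos (exp_pos _) hpos
    have hgrow : ∀ s ≥ σ, exp (c * s) * L - c * w s ≤ w' s := by
      intro s hs
      have h' : exp (c * s) * exp (-c * s) = 1 := by rw [← exp_add]; simp
      have : exp (c * s) * L ≤ w' s + c * w s :=
        calc exp (c * s) * L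
            ≤ exp (c * s) * (exp (-c * s) * (w' s + c * w s)) :=
              mul_le_mul_of_nonneg_left (hmono self_mem_Ici hs hs) (exp_pos _).le
          _ = w' s + c * w s := by rw [← mul_assoc, h', one_mul]
      linarith
    have hbig : Tendsto (fun s => exp (c * s) * L - c * w s) atTop atTop := by
      have hexp := (tendsto_exp_atTop.comp (tendsto_id.const_mul_atTop hc)).atTop_mul_const hL
      simpa [sub_eq_add_neg, comp_def] using hexp.atTop_add (hlim.const_mul (-c))
    obtain ⟨b, hb⟩ := eventually_atTop.1
      ((hbig.eventually_ge_atTop 1).and (eventually_ge_atTop σ))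
    have := tendsto_atTop_of_one_le_deriv (a := max a b) (fun s hs => hw s (le_of_max_le_left hs))
      fun s hs => (hb s (le_of_max_le_right hs)).1.trans (hgrow s (hb s (le_of_max_le_right hs)).2)
    exact not_tendsto_nhds_of_tendsto_atTop this 0 hlim
  intro s hs
  have hmono := monotoneOn_exp_mul_of_mul_le_deriv (c := -c) (f := fun s => -w s)
    (fun s hs => (hw s hs).neg) fun s hs => by linarith [hp s hs]
  have h := hmono self_mem_Ici hs hs
  simp only [neg_neg] at h
  nlinarith [exp_pos (c * a), exp_pos (c * s)]

/-- Compare `y` with the supersolution `A e^{-√κ s} + B e^{-μ s}` for arbitrarily small `B`. -/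
lemma tendsto_exp_mul_mul_of_le_deriv2 {μ κ : ℝ} (hμ : 0 < μ) (hκ : μ ^ 2 < κ)
    {y y' y'' : ℝ → ℝ} (hy : ∀ᶠ s in atTop, HasDerivAt y (y' s) s)
    (hy' : ∀ᶠ s in atTop, HasDerivAt y' (y'' s) s)
    (hineq : ∀ ε > 0, ∀ᶠ s in atTop, κ * y s - ε * exp (-μ * s) ≤ y'' s)
    (hnn : ∀ s, 0 ≤ y s) (hlim : Tendsto y atTop (𝓝 0)) :
    Tendsto (fun s => exp (μ * s) * y s) atTop (𝓝 0) := by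
  set c := √κ
  have hμc : μ < c := Real.lt_sqrt hμ.le |>.2 hκ
  have hc : 0 < c := hμ.trans hμc
  have hcκ : c ^ 2 = κ := Real.sq_sqrt (by nlinarith)
  refine tendsto_order.2 ⟨fun b hb => Eventually.of_forall fun s =>
    hb.trans_le (mul_nonneg (exp_pos _).le (hnn s)), fun b hb => ?_⟩
  set B := b / 2
  have hB : 0 < B := half_pos hb
  obtain ⟨s₀, hs₀⟩ := eventually_atTop.1
    (hy.and (hy'.and (hineq (B * (κ - μ ^ 2)) (mul_pos hB (by linarith)))))
  set A := y s₀ * exp (c * s₀)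
  have hle : ∀ s ≥ s₀, y s ≤ A * exp (-c * s) + B * exp (-μ * s) := by
    have hv : ∀ (ν : ℝ) (s : ℝ), HasDerivAt (fun s => exp (-ν * s)) (-ν * exp (-ν * s)) s :=
      fun ν s => hasDerivAt_exp_mul (-ν) s
    have := nonpos_of_sq_mul_le_deriv2 hc (a := s₀)
      (w := fun s => y s - (A * exp (-c * s) + B * exp (-μ * s)))
      (w' := fun s => y' s - (A * (-c * exp (-c * s)) + B * (-μ * exp (-μ * s))))
      (w'' := fun s => y'' s - (A * (-c * (-c * exp (-c * s))) + B * (-μ * (-μ * exp (-μ * s)))))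
      (fun s hs => (hs₀ s hs).1.sub (((hv c s).const_mul A).add ((hv μ s).const_mul B)))
      (fun s hs => (hs₀ s hs).2.1.sub
        ((((hv c s).const_mul (-c)).const_mul A).add (((hv μ s).const_mul (-μ)).const_mul B)))
      (fun s hs => by have := (hs₀ s hs).2.2; rw [← hcκ] at this; linarith)
      (by
        have : A * exp (-c * s₀) = y s₀ := by
          rw [mul_assoc, ← exp_add]; simp
        nlinarith [exp_pos (-μ * s₀)])
      (by simpa using hlim.sub (((tendsto_exp_neg_mul_atTop hc).const_mul A).add
        ((tendsto_exp_neg_mul_atTop hμ).const_mul B)))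
    exact fun s hs => sub_nonpos.1 (this s hs)
  have hsmall : Tendsto (fun s => A * exp (-(c - μ) * s)) atTop (𝓝 0) := by
    simpa using (tendsto_exp_neg_mul_atTop (sub_pos.2 hμc)).const_mul A
  filter_upwards [eventually_ge_atTop s₀, hsmall.eventually (eventually_lt_nhds hB)] with s hs hA
  calc exp (μ * s) * y s ≤ exp (μ * s) * (A * exp (-c * s) + B * exp (-μ * s)) :=
        mul_le_mul_of_nonneg_left (hle s hs) (exp_pos _).le
    _ = A * exp (-(c - μ) * s) + B := by
        rw [mul_add, mul_left_comm, ← exp_add, mul_left_comm, ← exp_add]; ring_nf; simp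
    _ < b := by linarith [show B = b / 2 from rfl]

end Comparison

section UnifDecay

variable {E : Type*} [NormedAddCommGroup E] {d : ℝ} {g : ℝ → ℝ → E}

lemma UnifDecay.eventually_norm_le (hg : UnifDecay d g) {δ : ℝ} (hδ : 0 < δ) :
    ∀ᶠ s in atTop, ∀ t, ‖g s t‖ ≤ δ * exp (-d * s) := by
  obtain ⟨s₀, hs₀⟩ := hg δ hδ
  filter_upwards [eventually_ge_atTop s₀] with s hs t
  calc ‖g s t‖ = exp (-d * s) * (exp (d * s) * ‖g s t‖) := by
        rw [← mul_assoc, ← exp_add]; simp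
    _ ≤ exp (-d * s) * δ := mul_le_mul_of_nonneg_left (hs₀ s hs t).le (exp_pos _).le
    _ = δ * exp (-d * s) := mul_comm _ _

lemma UnifDecay.tendsto_integral_norm_sq (hg : UnifDecay 0 g) :
    Tendsto (fun s => ∫ t in (0:ℝ)..1, ‖g s t‖ ^ 2) atTop (𝓝 0) := by
  rw [Metric.tendsto_nhds]
  intro ε hε
  filter_upwards [hg.eventually_norm_le (Real.sqrt_pos.2 (half_pos hε))] with s hs
  have hbound : ∀ t ∈ uIoc (0:ℝ) 1, ‖‖g s t‖ ^ 2‖ ≤ √(ε / 2) ^ 2 := fun t _ => by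
    simpa using pow_le_pow_left₀ (norm_nonneg _) (by simpa using hs t) 2
  rw [dist_zero_right]
  calc _ ≤ √(ε / 2) ^ 2 * |1 - 0| := intervalIntegral.norm_integral_le_of_norm_le_const hbound
    _ < ε := by
      rw [Real.sq_sqrt (by positivity), sub_zero, abs_one, mul_one]
      linarith

end UnifDecay

section Energy

variable {k : ℕ} {X h : ℝ → ℝ → EV k} {s : ℝ}

lemma pS_pS_add_J0CLM_pT_pS (hX : ContDiffOn ℝ ∞ (uncurry X) (Ioi 0 ×ˢ univ))
    (hPDE : ∀ s > 0, ∀ t, pS X s t + J0CLM k (pT X s t) = h s t) (hs : 0 < s) (t : ℝ) :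
    pS (pS X) s t + J0CLM k (pT (pS X) s t) = pS h s t := by
  have hU : IsOpen (Ioi (0:ℝ) ×ˢ (univ : Set ℝ)) := isOpen_Ioi.prod isOpen_univ
  have hst : (s, t) ∈ Ioi (0:ℝ) ×ˢ (univ : Set ℝ) := ⟨hs, mem_univ t⟩
  have hder : HasDerivAt (fun s' => pS X s' t + J0CLM k (pT X s' t))
      (pS (pS X) s t + J0CLM k (pS (pT X) s t)) s :=
    (hasDerivAt_pS hU (contDiffOn_pS hU hX) hst).add
      ((J0CLM k).hasFDerivAt.comp_hasDerivAt s (hasDerivAt_pS hU (contDiffOn_pT hU hX) hst))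
  have heq : (fun s' => h s' t) =ᶠ[𝓝 s] fun s' => pS X s' t + J0CLM k (pT X s' t) := by
    filter_upwards [eventually_gt_nhds hs] with s' hs' using (hPDE s' hs' t).symm
  rw [pT_pS hU hX hst]
  exact (hder.congr_of_eventuallyEq heq).deriv.symm

/-- Integrating `∂ₜ⟪X, J₀ ∂ₛX⟫` over the circle removes the mixed derivative `∂ₜ∂ₛX`. -/
lemma integral_inner_pS_pS_add_norm_sq_eq (hX : ContDiffOn ℝ ∞ (uncurry X) (Ioi 0 ×ˢ univ))
    (hh : ContDiffOn ℝ ∞ (uncurry h) (Ioi 0 ×ˢ univ)) (hXper : ∀ s t, X s (t + 1) = X s t)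
    (hPDE : ∀ s > 0, ∀ t, pS X s t + J0CLM k (pT X s t) = h s t) (hs : 0 < s) :
    ∫ t in (0:ℝ)..1, (⟪X s t, pS (pS X) s t⟫ + ‖pS X s t‖ ^ 2) =
      ∫ t in (0:ℝ)..1, (‖pS X s t‖ ^ 2 + ‖pT X s t‖ ^ 2 + ⟪X s t, pS h s t⟫
        + ⟪pT X s t, J0CLM k (h s t)⟫) := by
  have hU : IsOpen (Ioi (0:ℝ) ×ˢ (univ : Set ℝ)) := isOpen_Ioi.prod isOpen_univ
  have hst : ∀ t : ℝ, (s, t) ∈ Ioi (0:ℝ) ×ˢ (univ : Set ℝ) := fun t => ⟨hs, mem_univ t⟩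
  have cX := continuous_slice isOpen_Ioi hX hs
  have cXs := continuous_slice isOpen_Ioi (contDiffOn_pS hU hX) hs
  have cXt := continuous_slice isOpen_Ioi (contDiffOn_pT hU hX) hs
  have cXst := continuous_slice isOpen_Ioi (contDiffOn_pT hU (contDiffOn_pS hU hX)) hs
  have ch := continuous_slice isOpen_Ioi hh hs
  have chs := continuous_slice isOpen_Ioi (contDiffOn_pS hU hh) hs
  set Φ' : ℝ → ℝ := fun t =>
    ⟪X s t, J0CLM k (pT (pS X) s t)⟫ + ⟪pT X s t, J0CLM k (pS X s t)⟫
  have hΦ : ∀ t, HasDerivAt (fun t => ⟪X s t, J0CLM k (pS X s t)⟫) (Φ' t) t := fun t =>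
    (hasDerivAt_pT hU hX (hst t)).inner ℝ
      ((J0CLM k).hasFDerivAt.comp_hasDerivAt t (hasDerivAt_pT hU (contDiffOn_pS hU hX) (hst t)))
  have hΦ0 : ∫ t in (0:ℝ)..1, Φ' t = 0 := by
    have hper : ∀ s, X s 1 = X s 0 := fun s => by simpa using hXper s 0
    rw [intervalIntegral.integral_eq_sub_of_hasDerivAt (fun t _ => hΦ t)
      (Continuous.intervalIntegrable (by fun_prop) 0 1)]
    simp only [pS, hper, sub_self]
  have hpoint : ∀ t, ⟪X s t, pS (pS X) s t⟫ + ‖pS X s t‖ ^ 2 =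
      ‖pS X s t‖ ^ 2 + ‖pT X s t‖ ^ 2 + ⟪X s t, pS h s t⟫ + ⟪pT X s t, J0CLM k (h s t)⟫ - Φ' t := by
    intro t
    rw [← pS_pS_add_J0CLM_pT_pS hX hPDE hs t, ← hPDE s hs t, map_add, J0CLM_J0CLM]
    simp only [Φ', inner_add_right, inner_neg_right, real_inner_self_eq_norm_sq]
    ring
  simp_rw [hpoint]
  rw [intervalIntegral.integral_sub (Continuous.intervalIntegrable (by fun_prop) 0 1)
    (Continuous.intervalIntegrable (by fun_prop) 0 1), hΦ0, sub_zero]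

lemma le_two_mul_integral_energy (hX : ContDiffOn ℝ ∞ (uncurry X) (Ioi 0 ×ˢ univ))
    (hh : ContDiffOn ℝ ∞ (uncurry h) (Ioi 0 ×ˢ univ))
    (hmean : ∀ s > 0, ∫ t in (0:ℝ)..1, X s t = 0) {a B₀ B₁ : ℝ} (ha : 0 < a)
    (hB₀ : ∀ t, ‖h s t‖ ≤ B₀) (hB₁ : ∀ t, ‖pS h s t‖ ≤ B₁) (hs : 0 < s) :
    (1 - a) * (∫ t in (0:ℝ)..1, ‖X s t‖ ^ 2) - (B₁ ^ 2 / a + B₀ ^ 2) ≤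
      2 * ∫ t in (0:ℝ)..1, (‖pS X s t‖ ^ 2 + ‖pT X s t‖ ^ 2 + ⟪X s t, pS h s t⟫
        + ⟪pT X s t, J0CLM k (h s t)⟫) := by
  have hU : IsOpen (Ioi (0:ℝ) ×ˢ (univ : Set ℝ)) := isOpen_Ioi.prod isOpen_univ
  have hst : ∀ t : ℝ, (s, t) ∈ Ioi (0:ℝ) ×ˢ (univ : Set ℝ) := fun t => ⟨hs, mem_univ t⟩
  have cX := continuous_slice isOpen_Ioi hX hs
  have cXs := continuous_slice isOpen_Ioi (contDiffOn_pS hU hX) hs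
  have cXt := continuous_slice isOpen_Ioi (contDiffOn_pT hU hX) hs
  have ch := continuous_slice isOpen_Ioi hh hs
  have chs := continuous_slice isOpen_Ioi (contDiffOn_pS hU hh) hs
  set C := B₁ ^ 2 / a + B₀ ^ 2
  have hpoint : ∀ t ∈ Icc (0:ℝ) 1, ‖pT X s t‖ ^ 2 - a * ‖X s t‖ ^ 2 - C ≤
      2 * (‖pS X s t‖ ^ 2 + ‖pT X s t‖ ^ 2 + ⟪X s t, pS h s t⟫ + ⟪pT X s t, J0CLM k (h s t)⟫) := by
    intro t _
    have h₁ := neg_le_two_mul_inner ha (X s t) (pS h s t)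
    have h₂ := neg_le_two_mul_inner one_pos (pT X s t) (J0CLM k (h s t))
    have h₃ : ‖pS h s t‖ ^ 2 / a ≤ B₁ ^ 2 / a :=
      div_le_div_of_nonneg_right (pow_le_pow_left₀ (norm_nonneg _) (hB₁ t) 2) ha.le
    have h₄ : ‖h s t‖ ^ 2 ≤ B₀ ^ 2 := pow_le_pow_left₀ (norm_nonneg _) (hB₀ t) 2
    rw [norm_J0CLM] at h₂
    nlinarith [sq_nonneg ‖pS X s t‖]
  have hint : ∫ t in (0:ℝ)..1, (‖pT X s t‖ ^ 2 - a * ‖X s t‖ ^ 2 - C) ≤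
      ∫ t in (0:ℝ)..1, 2 * (‖pS X s t‖ ^ 2 + ‖pT X s t‖ ^ 2 + ⟪X s t, pS h s t⟫
        + ⟪pT X s t, J0CLM k (h s t)⟫) :=
    intervalIntegral.integral_mono_on zero_le_one (Continuous.intervalIntegrable (by fun_prop) 0 1)
      (Continuous.intervalIntegrable (by fun_prop) 0 1) hpoint
  have hsplit : ∫ t in (0:ℝ)..1, (‖pT X s t‖ ^ 2 - a * ‖X s t‖ ^ 2 - C) =
      (∫ t in (0:ℝ)..1, ‖pT X s t‖ ^ 2) - a * (∫ t in (0:ℝ)..1, ‖X s t‖ ^ 2) - C := by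
    rw [intervalIntegral.integral_sub (Continuous.intervalIntegrable (by fun_prop) 0 1)
        intervalIntegrable_const,
      intervalIntegral.integral_sub (Continuous.intervalIntegrable (by fun_prop) 0 1)
        (Continuous.intervalIntegrable (by fun_prop) 0 1),
      intervalIntegral.integral_const_mul]
    simp
  have hpoincare : ∫ t in (0:ℝ)..1, ‖X s t‖ ^ 2 ≤ ∫ t in (0:ℝ)..1, ‖pT X s t‖ ^ 2 :=
    integral_norm_sq_le_integral_norm_deriv_sq (fun t => hasDerivAt_pT hU hX (hst t))
      cXt (hmean s hs)
  have htwo : ∫ t in (0:ℝ)..1, 2 * (‖pS X s t‖ ^ 2 + ‖pT X s t‖ ^ 2 + ⟪X s t, pS h s t⟫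
        + ⟪pT X s t, J0CLM k (h s t)⟫) =
      2 * ∫ t in (0:ℝ)..1, (‖pS X s t‖ ^ 2 + ‖pT X s t‖ ^ 2 + ⟪X s t, pS h s t⟫
        + ⟪pT X s t, J0CLM k (h s t)⟫) :=
    intervalIntegral.integral_const_mul _ _
  linarith

lemma eventually_le_two_mul_integral_inner_pS_pS (hX : ContDiffOn ℝ ∞ (uncurry X) (Ioi 0 ×ˢ univ))
    (hh : ContDiffOn ℝ ∞ (uncurry h) (Ioi 0 ×ˢ univ)) (hXper : ∀ s t, X s (t + 1) = X s t)
    (hPDE : ∀ s > 0, ∀ t, pS X s t + J0CLM k (pT X s t) = h s t)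
    (hmean : ∀ s > 0, ∫ t in (0:ℝ)..1, X s t = 0) {d κ : ℝ} (hκ : κ < 1)
    (hdecay : UnifDecay d h) (hdecay' : UnifDecay d (pS h)) {ε : ℝ} (hε : 0 < ε) :
    ∀ᶠ s in atTop, κ * (∫ t in (0:ℝ)..1, ‖X s t‖ ^ 2) - ε * exp (-(2 * d) * s) ≤
      2 * ∫ t in (0:ℝ)..1, (⟪X s t, pS (pS X) s t⟫ + ‖pS X s t‖ ^ 2) := by
  set a := 1 - κ
  have ha : 0 < a := sub_pos.2 hκ
  set δ := √(ε * a / (1 + a))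
  have hδ : δ ^ 2 = ε * a / (1 + a) := Real.sq_sqrt (by positivity)
  filter_upwards [eventually_gt_atTop 0, hdecay.eventually_norm_le (by positivity : 0 < δ),
    hdecay'.eventually_norm_le (by positivity : 0 < δ)] with s hs h₀ h₁
  rw [integral_inner_pS_pS_add_norm_sq_eq hX hh hXper hPDE hs]
  refine le_of_eq_of_le ?_ (le_two_mul_integral_energy hX hh hmean ha h₀ h₁ hs)
  rw [sub_sub_cancel]
  have hexp : exp (-d * s) ^ 2 = exp (-(2 * d) * s) := by rw [← exp_nat_mul]; ring_nf
  rw [mul_pow, hexp, hδ]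
  field_simp

end Energy

theorem stmt7_general (k : ℕ) (d : ℝ) (hd0 : 0 < d) (hd : d < 1 / 2)
    (X h : ℝ → ℝ → EV k)
    (hXper : ∀ s t, X s (t + 1) = X s t)
    (hXsmooth : SmoothOnZ (⊤ : ℕ∞) X)
    (hhsmooth : SmoothOnZ (⊤ : ℕ∞) h)
    (hPDE : ∀ s, 0 ≤ s → ∀ t, pS X s t + matAct (J0 k) (pT X s t) = h s t)
    (hhdecay : ∀ g₁ g₂ : ℕ, UnifDecay d (Dmix g₁ g₂ h))
    (hXdecay : UnifDecay 0 X)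
    (hmean : ∀ s, 0 ≤ s → (∫ t in (0:ℝ)..1, X s t) = 0) :
    Tendsto (fun s => Real.exp (d * s) * Real.sqrt (∫ t in (0:ℝ)..1, ‖X s t‖ ^ 2))
      atTop (nhds 0) := by
  have hsub : Ioi (0:ℝ) ×ˢ (univ : Set ℝ) ⊆ Ici 0 ×ˢ univ := prod_mono Ioi_subset_Ici_self le_rfl
  have hX : ContDiffOn ℝ ∞ (uncurry X) (Ioi 0 ×ˢ univ) := hXsmooth.mono hsub
  have hh : ContDiffOn ℝ ∞ (uncurry h) (Ioi 0 ×ˢ univ) := hhsmooth.mono hsub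
  have h2d : (2 * d) ^ 2 < 1 := by nlinarith
  have hdecay := tendsto_exp_mul_mul_of_le_deriv2 (μ := 2 * d) (κ := (1 + (2 * d) ^ 2) / 2)
    (by positivity) (by linarith)
    (eventually_gt_atTop 0 |>.mono fun s hs => hasDerivAt_integral_norm_sq isOpen_Ioi hX hs)
    (eventually_gt_atTop 0 |>.mono fun s hs =>
      (hasDerivAt_integral_inner_pS isOpen_Ioi hX hs).const_mul 2)
    (fun ε hε => eventually_le_two_mul_integral_inner_pS_pS hX hh hXper
      (fun s hs => hPDE s hs.le) (fun s hs => hmean s hs.le) (by linarith)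
      (by simpa [Dmix] using hhdecay 0 0) (by simpa [Dmix] using hhdecay 1 0) hε)
    (fun s => intervalIntegral.integral_nonneg zero_le_one fun t _ => by positivity)
    hXdecay.tendsto_integral_norm_sq
  have hsqrt := hdecay.sqrt
  rw [Real.sqrt_zero] at hsqrt
  refine hsqrt.congr fun s => ?_
  rw [Real.sqrt_mul (exp_pos _).le, show 2 * d * s = d * s + d * s by ring, exp_add,
    Real.sqrt_mul_self (exp_pos _).le]

/-- STEP 1 of the exponential `L²`-decay lemma: decay for solutions of
`X_s + J₀X_t = h` with vanishing mean. -/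
theorem stmt7 (k : ℕ) (d : ℝ) (hd0 : 0 < d) (hd : d < 1 / 2)
    (X h : ℝ → ℝ → EV k)
    (hXper : ∀ s t, X s (t + 1) = X s t)
    (hXsmooth : SmoothOnZ (⊤ : ℕ∞) X)
    (hhper : ∀ s t, h s (t + 1) = h s t)
    (hhsmooth : SmoothOnZ (⊤ : ℕ∞) h)
    (hPDE : ∀ s, 0 ≤ s → ∀ t, pS X s t + matAct (J0 k) (pT X s t) = h s t)
    (hhdecay : ∀ g₁ g₂ : ℕ, UnifDecay d (Dmix g₁ g₂ h))
    (hXdecay : UnifDecay 0 X)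
    (hmean : ∀ s, 0 ≤ s → (∫ t in (0:ℝ)..1, X s t) = 0) :
    Tendsto (fun s => Real.exp (d * s) * Real.sqrt (∫ t in (0:ℝ)..1, ‖X s t‖ ^ 2))
      atTop (nhds 0) :=
  stmt7_general k d hd0 hd X h hXper hXsmooth hhsmooth hPDE hhdecay hXdecay hmean
end
end

section
/- Let g : ℝ → ℝ be smooth and 2π-periodic, let k be a negative integer, and suppose there exist σ > 0 and a nonempty open interval I ⊂ (2πk, 0) such that g(ϑ) ≥ σ for all ϑ ∈ I. Then there exists a smooth function ϑ : ℝ → ℝ such that ϑ(0) = 0, ϑ(1) = 2πk, the derivative ϑ′ is 1-periodic, and ϑ′(t) − g(ϑ(t)) < 0 for all t ∈ ℝ. -/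
/-!
At a constant speed `M` below both `min g` and `2πk`, the angle would cover `2πk` in time
`T = 2πk / M < 1`, so the remaining time `1 - T` must be spent pausing.
We pause only while the angle lies in `(a, b)`, where `g > 0`: there the derivative is `≤ 0`,
elsewhere it is `M < g`. The pause is produced by a smooth `1`-periodic bump `ψ`, taking
`ϑ(t) = M (t - l ∫₀ᵗ ψ)` with `l ∈ [0, 1]` tuned so that `ϑ(1) = 2πk`. A periodic derivative
gives `ϑ(t + 1) = ϑ(t) + 2πk`, and `g` is `2πk`-periodic, so `ϑ' - g ∘ ϑ` is `1`-periodic and it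
suffices to check its sign on `[0, 1)`.
-/

open Filter Set Function Real intervalIntegral

noncomputable section

lemma cos_le_cos_of_le_of_le_two_pi_sub {x y : ℝ} (hx : 0 ≤ x) (hxy : x ≤ y)
    (hy : y ≤ 2 * π - x) : cos y ≤ cos x := by
  rcases le_or_gt y π with hyπ | hyπ
  · exact cos_le_cos_of_nonneg_of_le_pi hx hyπ hxy
  · rw [← cos_two_pi_sub y]
    exact cos_le_cos_of_nonneg_of_le_pi hx (by linarith) (by linarith)

lemma exists_periodic_bump (c : ℝ) {r R : ℝ} (hr : 0 ≤ r) (hrR : r < R) (hR : R ≤ 1 / 2) :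
    ∃ ψ : ℝ → ℝ, ContDiff ℝ (⊤ : ℕ∞) ψ ∧ Periodic ψ 1 ∧ (∀ s, ψ s ∈ Icc 0 1) ∧
      EqOn ψ (fun _ => 1) (Icc (c - r) (c + r)) ∧
      EqOn ψ (fun _ => 0) (Icc (c + R) (c + 1 - R)) := by
  have hπ := pi_pos
  have hcos : cos (2 * π * R) < cos (2 * π * r) :=
    cos_lt_cos_of_nonneg_of_le_pi (by positivity) (by nlinarith) (by nlinarith)
  refine ⟨fun s => smoothTransition
      ((cos (2 * π * (s - c)) - cos (2 * π * R)) / (cos (2 * π * r) - cos (2 * π * R))),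
    ?_, fun s => ?_, fun s => ⟨smoothTransition.nonneg _, smoothTransition.le_one _⟩,
    fun s hs => ?_, fun s hs => ?_⟩
  · exact smoothTransition.contDiff.comp (by fun_prop)
  · simp only [show 2 * π * (s + 1 - c) = 2 * π * (s - c) + 2 * π by ring, cos_add_two_pi]
  · refine smoothTransition.one_of_one_le ((one_le_div (sub_pos.2 hcos)).2 (sub_le_sub_right ?_ _))
    have habs : |s - c| ≤ r := abs_le.2 ⟨by linarith [hs.1], by linarith [hs.2]⟩
    rw [← cos_abs (2 * π * (s - c)), abs_mul, abs_of_pos (by positivity : 0 < 2 * π)]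
    exact cos_le_cos_of_nonneg_of_le_pi (by positivity) (by nlinarith) (by gcongr)
  · refine smoothTransition.zero_of_nonpos (div_nonpos_of_nonpos_of_nonneg ?_ (sub_pos.2 hcos).le)
    exact sub_nonpos.2 (cos_le_cos_of_le_of_le_two_pi_sub (by nlinarith)
      (by nlinarith [hs.1]) (by nlinarith [hs.2]))

lemma exists_periodic_bump_Ioo {p q w : ℝ} (hp : 0 ≤ p) (hq : q ≤ 1) (hw : 0 ≤ w)
    (hwpq : w < q - p) :
    ∃ ψ : ℝ → ℝ, ContDiff ℝ (⊤ : ℕ∞) ψ ∧ Periodic ψ 1 ∧ (∀ s, ψ s ∈ Icc 0 1) ∧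
      EqOn ψ (fun _ => 0) (Icc 0 p) ∧ EqOn ψ (fun _ => 0) (Icc q 1) ∧
      w ≤ ∫ s in 0..1, ψ s := by
  obtain ⟨ψ, hψ, hper, hrange, hone, hzero⟩ := exists_periodic_bump ((p + q) / 2)
    (r := w / 2) (R := (q - p) / 2) (by linarith) (by linarith) (by linarith)
  refine ⟨ψ, hψ, hper, hrange, fun s hs => ?_,
    fun s hs => hzero ⟨by linarith [hs.1], by linarith [hs.2]⟩, ?_⟩
  · rw [← hper s]
    exact hzero ⟨by linarith [hs.1], by linarith [hs.2]⟩
  · calc w = ∫ s in ((p + q) / 2 - w / 2)..((p + q) / 2 + w / 2), ψ s := by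
          rw [integral_congr (hone.mono (uIcc_of_le (by linarith)).subset)]
          simp
      _ ≤ ∫ s in 0..1, ψ s :=
          integral_mono_interval (by linarith) (by linarith) (by linarith)
            (Eventually.of_forall fun s => (hrange s).1)
            (hψ.continuous.intervalIntegrable _ _)

def slowedRotation (M l : ℝ) (ψ : ℝ → ℝ) (t : ℝ) : ℝ :=
  M * (t - l * ∫ x in 0..t, ψ x)

section slowedRotation

variable {M l : ℝ} {ψ : ℝ → ℝ}

lemma hasDerivAt_slowedRotation (hψ : Continuous ψ) (t : ℝ) :
    HasDerivAt (slowedRotation M l ψ) (M * (1 - l * ψ t)) t :=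
  ((hasDerivAt_id t).sub ((hψ.integral_hasStrictDerivAt 0 t).hasDerivAt.const_mul l)).const_mul M

lemma deriv_slowedRotation (hψ : Continuous ψ) :
    deriv (slowedRotation M l ψ) = fun t => M * (1 - l * ψ t) :=
  funext fun t => (hasDerivAt_slowedRotation hψ t).deriv

lemma contDiff_slowedRotation (hψ : ContDiff ℝ (⊤ : ℕ∞) ψ) :
    ContDiff ℝ (⊤ : ℕ∞) (slowedRotation M l ψ) := by
  rw [contDiff_infty_iff_deriv, deriv_slowedRotation hψ.continuous]
  exact ⟨fun t => (hasDerivAt_slowedRotation hψ.continuous t).differentiableAt, by fun_prop⟩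

lemma antitone_slowedRotation (hψ : Continuous ψ) (hM : M ≤ 0) (hlψ : ∀ t, l * ψ t ≤ 1) :
    Antitone (slowedRotation M l ψ) :=
  antitone_of_deriv_nonpos (fun t => (hasDerivAt_slowedRotation hψ t).differentiableAt) fun t => by
    rw [deriv_slowedRotation hψ]
    exact mul_nonpos_of_nonpos_of_nonneg hM (sub_nonneg.2 (hlψ t))

lemma slowedRotation_mem_Icc {p q s : ℝ} (hψ : Continuous ψ) (hM : M ≤ 0)
    (hlψ : ∀ t, l * ψ t ≤ 1) (hp : 0 ≤ p) (hq : q ≤ 1) (hzero_left : EqOn ψ (fun _ => 0) (Icc 0 p))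
    (hzero_right : EqOn ψ (fun _ => 0) (Icc q 1)) (hs : s ∈ Icc p q) :
    slowedRotation M l ψ s ∈ Icc (M * (q - l * ∫ x in 0..1, ψ x)) (M * p) := by
  have hanti := antitone_slowedRotation hψ hM hlψ
  have hϑp : slowedRotation M l ψ p = M * p := by
    simp [slowedRotation, integral_congr (hzero_left.mono (uIcc_of_le hp).subset)]
  have hϑq : slowedRotation M l ψ q = M * (q - l * ∫ x in 0..1, ψ x) := by
    have := integral_add_adjacent_intervals (μ := MeasureTheory.volume)
      (hψ.intervalIntegrable 0 q) (hψ.intervalIntegrable q 1)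
    rw [integral_congr (hzero_right.mono (uIcc_of_le hq).subset), integral_zero, add_zero] at this
    rw [slowedRotation, this]
  exact ⟨hϑq ▸ hanti hs.2, hϑp ▸ hanti hs.1⟩

end slowedRotation

lemma Function.Periodic.add_eq_add_of_deriv {f : ℝ → ℝ} {c : ℝ} (hf : Differentiable ℝ f)
    (h : Periodic (deriv f) c) (t : ℝ) : f (t + c) = f t + (f c - f 0) := by
  have hconst := is_const_of_deriv_eq_zero (f := fun t => f (t + c) - f t)
    (by fun_prop) (fun x => by
      rw [(((hf (x + c)).hasDerivAt.comp_add_const x c).fun_sub (hf x).hasDerivAt).deriv, h x,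
        sub_self]) t 0
  simp only [zero_add] at hconst
  linarith

lemma exists_angle_pausing_in_Ioo {M K a b : ℝ} (hMK : M < K) (hKa : K < a) (hab : a < b)
    (hb : b < 0) :
    ∃ ϑ : ℝ → ℝ, ContDiff ℝ (⊤ : ℕ∞) ϑ ∧ ϑ 0 = 0 ∧ ϑ 1 = K ∧ Periodic (deriv ϑ) 1 ∧
      ∀ s ∈ Ico (0 : ℝ) 1, deriv ϑ s = M ∨ (deriv ϑ s ≤ 0 ∧ ϑ s ∈ Ioo a b) := by
  have hM : M < 0 := by linarith
  -- at speed `M` the angle crosses `(a, b)` during the times `(A, B)` and reaches `K` at time `T`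
  set T := K / M
  set A := b / M
  set B := a / M
  have hA : 0 < A := div_pos_of_neg_of_neg hb hM
  have hAB : A < B := (div_lt_div_right_of_neg hM).2 hab
  have hBT : B < T := (div_lt_div_right_of_neg hM).2 hKa
  have hT : T < 1 := (div_lt_one_of_neg hM).2 hMK
  obtain ⟨p, q, hAp, hpq, hqB⟩ : ∃ p q, A < p ∧ 1 - T < q - p ∧ q - (1 - T) < B :=
    ⟨A + (B - A) / 4, B + (1 - T) - (B - A) / 4, by linarith, by linarith, by linarith⟩
  have hp : 0 ≤ p := by linarith
  have hq : q ≤ 1 := by linarith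
  obtain ⟨ψ, hψ, hper, hrange, hzero_left, hzero_right, hJ⟩ :=
    exists_periodic_bump_Ioo hp hq (by linarith) hpq
  set J := ∫ s in 0..1, ψ s
  set l := (1 - T) / J
  have hJ0 : 0 < J := by linarith
  have hl0 : 0 ≤ l := div_nonneg (by linarith) hJ0.le
  have hlJ : l * J = 1 - T := div_mul_cancel₀ _ hJ0.ne'
  have hlψ : ∀ t, l * ψ t ≤ 1 := fun t =>
    (mul_le_of_le_one_right hl0 (hrange t).2).trans ((div_le_one hJ0).2 hJ)
  set ϑ := slowedRotation M l ψ
  refine ⟨ϑ, contDiff_slowedRotation hψ, by simp [ϑ, slowedRotation], ?_, ?_, fun s hs => ?_⟩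
  · change M * (1 - l * J) = K
    rw [hlJ, sub_sub_cancel]
    exact mul_div_cancel₀ K hM.ne
  · rw [deriv_slowedRotation hψ.continuous]
    exact fun t => by simp only [hper t]
  rw [deriv_slowedRotation hψ.continuous]
  by_cases hψs : ψ s = 0
  · simp [hψs]
  refine Or.inr ⟨mul_nonpos_of_nonpos_of_nonneg hM.le (sub_nonneg.2 (hlψ s)), ?_⟩
  have hps : p < s := not_le.1 fun h => hψs (hzero_left ⟨hs.1, h⟩)
  have hsq : s < q := not_le.1 fun h => hψs (hzero_right ⟨h, hs.2.le⟩)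
  obtain ⟨hϑq, hϑp⟩ := slowedRotation_mem_Icc hψ.continuous hM.le hlψ hp hq hzero_left hzero_right
    ⟨hps.le, hsq.le⟩
  rw [hlJ] at hϑq
  constructor
  · calc a = M * B := (mul_div_cancel₀ a hM.ne).symm
      _ < M * (q - (1 - T)) := mul_lt_mul_of_neg_left hqB hM
      _ ≤ ϑ s := hϑq
  · calc ϑ s ≤ M * p := hϑp
      _ < M * A := mul_lt_mul_of_neg_left hAp hM
      _ = b := mul_div_cancel₀ b hM.ne

theorem stmt12_general (g : ℝ → ℝ) (hg : ContDiff ℝ (⊤ : ℕ∞) g)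
    (hper : Function.Periodic g (2 * Real.pi))
    (k : ℤ) (σ : ℝ) (hσ : 0 < σ) (a b : ℝ)
    (ha : 2 * Real.pi * (k : ℝ) < a) (hab : a < b) (hb : b < 0)
    (hgI : ∀ x ∈ Ioo a b, σ ≤ g x) :
    ∃ ϑ : ℝ → ℝ, ContDiff ℝ (⊤ : ℕ∞) ϑ ∧ ϑ 0 = 0 ∧ ϑ 1 = 2 * Real.pi * (k : ℝ) ∧
      Function.Periodic (deriv ϑ) 1 ∧ ∀ t : ℝ, deriv ϑ t - g (ϑ t) < 0 := by
  obtain ⟨m, hm⟩ := (hper.compact_of_continuous (by positivity) hg.continuous).bddBelow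
  obtain ⟨ϑ, hϑ, hϑ0, hϑ1, hϑ', hpause⟩ := exists_angle_pausing_in_Ioo
    (M := min m (2 * π * k) - 1) (by linarith [min_le_right m (2 * π * k)]) ha hab hb
  have hgK : Periodic g (2 * π * k) := by simpa only [mul_comm] using hper.int_mul k
  have hF : Periodic (fun t => deriv ϑ t - g (ϑ t)) 1 := fun t => by
    simp only [hϑ' t, hϑ'.add_eq_add_of_deriv (hϑ.differentiable (by simp)), hϑ0, hϑ1, sub_zero,
      hgK _]
  refine ⟨ϑ, hϑ, hϑ0, hϑ1, hϑ', fun t => ?_⟩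
  obtain ⟨s, hs, hts⟩ := hF.exists_mem_Ico₀ one_pos t
  rw [hts]
  rcases hpause s hs with hspeed | ⟨hspeed, hmem⟩
  · linarith [hm (mem_range_self (ϑ s)), min_le_left m (2 * π * k)]
  · linarith [hgI _ hmem]

/-- construction of the angle function in Case 2, `k < 0`: given a
smooth `2π`-periodic `g` bounded below by `σ > 0` on some nonempty open subinterval of
`(2πk, 0)`, there is a smooth angle function `ϑ` with `ϑ(0) = 0`, `ϑ(1) = 2πk`,
`1`-periodic derivative, and `ϑ' − g∘ϑ < 0` everywhere. -/
theorem stmt12 (g : ℝ → ℝ) (hg : ContDiff ℝ (⊤ : ℕ∞) g)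
    (hper : Function.Periodic g (2 * Real.pi))
    (k : ℤ) (hk : k < 0) (σ : ℝ) (hσ : 0 < σ) (a b : ℝ)
    (ha : 2 * Real.pi * (k : ℝ) < a) (hab : a < b) (hb : b < 0)
    (hgI : ∀ x ∈ Ioo a b, σ ≤ g x) :
    ∃ ϑ : ℝ → ℝ, ContDiff ℝ (⊤ : ℕ∞) ϑ ∧ ϑ 0 = 0 ∧ ϑ 1 = 2 * Real.pi * (k : ℝ) ∧
      Function.Periodic (deriv ϑ) 1 ∧ ∀ t : ℝ, deriv ϑ t - g (ϑ t) < 0 :=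
  stmt12_general g hg hper k σ hσ a b ha hab hb hgI
end
end

section
/- Let B ⊂ ℝ² be an open ball centered at the origin and let J : ℝ/ℤ×B → ℝ^{2×2} be smooth, with J(p)² = −I and det[v | J(p)v] > 0 for every point p and every nonzero v ∈ ℝ². Then there exists a smooth map L : ℝ/ℤ×B → ℝ^{2×2} with det L(p) = 1 and L(p)J(p) = J₀L(p) for every p, where J₀ = [[0,−1],[1,0]]. -/
open Filter Set

noncomputable section

/-- `J₀ = [[0,-1],[1,0]]`. -/
def J02 : Matrix (Fin 2) (Fin 2) ℝ := !![0, -1; 1, 0]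

/-- The `2 × 2` matrix with columns `a` and `b`. -/
def col2 (a b : Fin 2 → ℝ) : Matrix (Fin 2) (Fin 2) ℝ := !![a 0, b 0; a 1, b 1]

/-
A compatible complex structure `J = [[a, b], [c, d]]` has `c = det[e₁ | J e₁] > 0`, and `J² = -1`
forces `d = -a` and `a² + bc = -1`. The upper triangular matrix `L = [[√c, -a/√c], [0, 1/√c]]`
then has determinant `1` and satisfies `L J = J₀ L`; it is a smooth function of `J` on `c > 0`.
-/

def conjToJ02 (A : Matrix (Fin 2) (Fin 2) ℝ) : Matrix (Fin 2) (Fin 2) ℝ :=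
  !![√(A 1 0), -A 0 0 / √(A 1 0); 0, 1 / √(A 1 0)]

lemma det_col2_single_mulVec (A : Matrix (Fin 2) (Fin 2) ℝ) :
    (col2 (Pi.single 0 1) (A.mulVec (Pi.single 0 1))).det = A 1 0 := by
  simp [col2, Matrix.det_fin_two_of]

lemma det_conjToJ02 {A : Matrix (Fin 2) (Fin 2) ℝ} (hA : 0 < A 1 0) : (conjToJ02 A).det = 1 := by
  have : √(A 1 0) ≠ 0 := by positivity
  simp only [conjToJ02, one_div, Matrix.det_fin_two_of, mul_zero, sub_zero]
  field_simp

lemma conjToJ02_mul {A : Matrix (Fin 2) (Fin 2) ℝ} (hsq : A * A = -1) (hA : 0 < A 1 0) :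
    conjToJ02 A * A = J02 * conjToJ02 A := by
  have e00 : A 0 0 * A 0 0 + A 0 1 * A 1 0 = -1 := by
    simpa [Matrix.mul_apply] using congrFun (congrFun hsq 0) 0
  have e10 : A 1 0 * A 0 0 + A 1 1 * A 1 0 = 0 := by
    simpa [Matrix.mul_apply] using congrFun (congrFun hsq 1) 0
  have htr : A 1 1 = -A 0 0 := mul_left_cancel₀ hA.ne' (by linear_combination e10)
  have hs : √(A 1 0) * √(A 1 0) = A 1 0 := Real.mul_self_sqrt hA.le
  have : √(A 1 0) ≠ 0 := by positivity
  ext i j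
  fin_cases i <;> fin_cases j <;> simp only [conjToJ02, J02, htr, Fin.zero_eta,
    Fin.mk_one, Fin.isValue, Matrix.mul_apply, Fin.sum_univ_two, Matrix.of_apply, Matrix.cons_val',
    Matrix.cons_val_fin_one, Matrix.cons_val_zero, Matrix.cons_val_one, one_div, mul_neg, neg_mul,
    zero_mul, mul_zero, one_mul, zero_add, add_zero] <;> field_simp
  · linear_combination A 0 0 * hs
  · linear_combination A 0 1 * hs + e00
  · rw [sq, hs]

lemma ContDiffOn.conjToJ02_apply {E : Type*} [NormedAddCommGroup E] [NormedSpace ℝ E]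
    {n : WithTop ℕ∞} {f : E → Matrix (Fin 2) (Fin 2) ℝ} {s : Set E}
    (hf : ∀ i j, ContDiffOn ℝ n (fun p => f p i j) s) (hpos : ∀ p ∈ s, 0 < f p 1 0) (i j : Fin 2) :
    ContDiffOn ℝ n (fun p => conjToJ02 (f p) i j) s := by
  have hne : ∀ p ∈ s, √(f p 1 0) ≠ 0 := fun p hp => (Real.sqrt_pos.mpr (hpos p hp)).ne'
  have hsqrt : ContDiffOn ℝ n (fun p => √(f p 1 0)) s := (hf 1 0).sqrt fun p hp => (hpos p hp).ne'
  fin_cases i <;> fin_cases j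
  · exact hsqrt
  · exact (hf 0 0).neg.div hsqrt hne
  · exact contDiffOn_const
  · exact contDiffOn_const.div hsqrt hne

theorem stmt15_general (rB : ℝ)
    (J : ℝ → EuclideanSpace ℝ (Fin 2) → Matrix (Fin 2) (Fin 2) ℝ)
    (hsmooth : ∀ i j, ContDiffOn ℝ (⊤ : ℕ∞)
      (fun p : ℝ × EuclideanSpace ℝ (Fin 2) => J p.1 p.2 i j)
      (univ ×ˢ Metric.ball (0 : EuclideanSpace ℝ (Fin 2)) rB))
    (hper : ∀ θ x, J (θ + 1) x = J θ x)
    (hsq : ∀ θ : ℝ, ∀ x ∈ Metric.ball (0 : EuclideanSpace ℝ (Fin 2)) rB,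
      J θ x * J θ x = -1)
    (hcomp : ∀ θ : ℝ, ∀ x ∈ Metric.ball (0 : EuclideanSpace ℝ (Fin 2)) rB,
      ∀ v : Fin 2 → ℝ, v ≠ 0 → 0 < (col2 v ((J θ x).mulVec v)).det) :
    ∃ L : ℝ → EuclideanSpace ℝ (Fin 2) → Matrix (Fin 2) (Fin 2) ℝ,
      (∀ i j, ContDiffOn ℝ (⊤ : ℕ∞)
        (fun p : ℝ × EuclideanSpace ℝ (Fin 2) => L p.1 p.2 i j)
        (univ ×ˢ Metric.ball (0 : EuclideanSpace ℝ (Fin 2)) rB)) ∧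
      (∀ θ x, L (θ + 1) x = L θ x) ∧
      (∀ θ : ℝ, ∀ x ∈ Metric.ball (0 : EuclideanSpace ℝ (Fin 2)) rB,
        (L θ x).det = 1 ∧ L θ x * J θ x = J02 * L θ x) := by
  have hpos : ∀ θ, ∀ x ∈ Metric.ball (0 : EuclideanSpace ℝ (Fin 2)) rB, 0 < J θ x 1 0 :=
    fun θ x hx => det_col2_single_mulVec (J θ x) ▸
      hcomp θ x hx _ (Pi.single_ne_zero_iff.mpr one_ne_zero)
  refine ⟨fun θ x => conjToJ02 (J θ x),
    ContDiffOn.conjToJ02_apply hsmooth fun p hp => hpos p.1 p.2 hp.2, ?_, ?_⟩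
  · exact fun θ x => congrArg conjToJ02 (hper θ x)
  · exact fun θ x hx => ⟨det_conjToJ02 (hpos θ x hx), conjToJ02_mul (hsq θ x hx) (hpos θ x hx)⟩

/-- smooth `Sp(1)`-valued conjugation to the standard complex
structure: a smooth family `J` of complex structures on `ℝ²` compatible with the
standard area form, parametrized by `ℝ/ℤ × B`, admits a smooth family `L` of matrices of
determinant `1` with `L J = J₀ L`. -/
theorem stmt15 (rB : ℝ) (hrB : 0 < rB)
    (J : ℝ → EuclideanSpace ℝ (Fin 2) → Matrix (Fin 2) (Fin 2) ℝ)
    (hsmooth : ∀ i j, ContDiffOn ℝ (⊤ : ℕ∞)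
      (fun p : ℝ × EuclideanSpace ℝ (Fin 2) => J p.1 p.2 i j)
      (univ ×ˢ Metric.ball (0 : EuclideanSpace ℝ (Fin 2)) rB))
    (hper : ∀ θ x, J (θ + 1) x = J θ x)
    (hsq : ∀ θ : ℝ, ∀ x ∈ Metric.ball (0 : EuclideanSpace ℝ (Fin 2)) rB,
      J θ x * J θ x = -1)
    (hcomp : ∀ θ : ℝ, ∀ x ∈ Metric.ball (0 : EuclideanSpace ℝ (Fin 2)) rB,
      ∀ v : Fin 2 → ℝ, v ≠ 0 → 0 < (col2 v ((J θ x).mulVec v)).det) :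
    ∃ L : ℝ → EuclideanSpace ℝ (Fin 2) → Matrix (Fin 2) (Fin 2) ℝ,
      (∀ i j, ContDiffOn ℝ (⊤ : ℕ∞)
        (fun p : ℝ × EuclideanSpace ℝ (Fin 2) => L p.1 p.2 i j)
        (univ ×ˢ Metric.ball (0 : EuclideanSpace ℝ (Fin 2)) rB)) ∧
      (∀ θ x, L (θ + 1) x = L θ x) ∧
      (∀ θ : ℝ, ∀ x ∈ Metric.ball (0 : EuclideanSpace ℝ (Fin 2)) rB,
        (L θ x).det = 1 ∧ L θ x * J θ x = J02 * L θ x) :=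
  stmt15_general rB J hsmooth hper hsq hcomp
end
end

section
/- Let ε₂ ∈ (0,1), let A = (1−ε₂,1)×ℝ/ℤ, and let ρ₀, ρ₁ : A → (0,∞) be smooth functions with ∂_rρ₀ < 0 and ∂_rρ₁ < 0 everywhere. Let 0 < s₁ < s₀ and let r₀, r₁ : ℝ/ℤ → (1−ε₂,1) be smooth with r₀(ϑ) < r₁(ϑ) for all ϑ, such that ρ₁(r₁(ϑ),ϑ) = s₁ and ρ₁(r,ϑ) < s₁ whenever r > r₁(ϑ), while ρ₀(r₀(ϑ),ϑ) = s₀ and ρ₀(r,ϑ) > s₀ whenever r < r₀(ϑ). Then there exists a smooth function ρ₂ : A → (0,∞) with ∂_rρ₂ < 0 everywhere, ρ₂(r,ϑ) = ρ₁(r,ϑ) whenever r ≥ r₁(ϑ), and ρ₂(r,ϑ) = ρ₀(r,ϑ) whenever r ≤ r₀(ϑ). -/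
/-!
Take `ρ₂ = (1 - σ ∘ ρ₁) ρ₁ + (σ ∘ ρ₁) (A ∘ ρ₀)`, where `σ` is a smooth nondecreasing ramp from `0`
on `(-∞, s₁]` to `1` on `[b, ∞)`, and `A` is smooth, strictly increasing on `(0, ∞)`, at least `b`
there, and the identity on `[s₀, ∞)`. Compactness of the circle gives `b ∈ (s₁, s₀)` with `ρ₁ ≥ b`
on `{r ≤ r₀}`, so `ρ₂ = A ∘ ρ₀ = ρ₀` there, while `ρ₂ = ρ₁` on `{r ≥ r₁}`, where `ρ₁ ≤ s₁`.
The radial derivative is `σ'(ρ₁) ∂ᵣρ₁ (A(ρ₀) - ρ₁) + (1 - σ) ∂ᵣρ₁ + σ A'(ρ₀) ∂ᵣρ₀`: the first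
term is `≤ 0` since `σ'(ρ₁) ≠ 0` forces `ρ₁ < b ≤ A(ρ₀)`, and the rest is a convex combination
of negative numbers.
-/

open Filter Set Topology

noncomputable section

def smoothRamp (a b t : ℝ) : ℝ := Real.smoothTransition ((t - a) / (b - a))

namespace smoothRamp

variable {a b : ℝ}

theorem contDiff {n : ℕ∞} : ContDiff ℝ n (smoothRamp a b) :=
  Real.smoothTransition.contDiff.comp ((contDiff_id.sub contDiff_const).div_const _)

theorem mem_Icc (t : ℝ) : smoothRamp a b t ∈ Icc 0 1 :=
  ⟨Real.smoothTransition.nonneg _, Real.smoothTransition.le_one _⟩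

theorem monotone (hab : a < b) : Monotone (smoothRamp a b) := fun _ _ hxy =>
  Real.smoothTransition.monotone (by gcongr)

theorem eq_zero_of_le (hab : a < b) {t : ℝ} (ht : t ≤ a) : smoothRamp a b t = 0 :=
  Real.smoothTransition.zero_of_nonpos (div_nonpos_of_nonpos_of_nonneg (by linarith) (by linarith))

theorem eq_one_of_le (hab : a < b) {t : ℝ} (ht : b ≤ t) : smoothRamp a b t = 1 :=
  Real.smoothTransition.one_of_one_le ((one_le_div (by linarith)).2 (by linarith))

theorem pos_of_lt (hab : a < b) {t : ℝ} (ht : a < t) : 0 < smoothRamp a b t :=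
  Real.smoothTransition.pos_of_pos (div_pos (by linarith) (by linarith))

end smoothRamp

theorem exists_contDiff_pos_eq_one_of_le {s δ ε : ℝ} (hδ : 0 < δ) (hδs : δ < s) (hε : 0 < ε)
    (hε1 : ε ≤ 1) :
    ∃ a : ℝ → ℝ, ContDiff ℝ (⊤ : ℕ∞) a ∧ (∀ t, a t ∈ Icc 0 1) ∧ (∀ t, s ≤ t → a t = 1) ∧
      (∀ t, t ≤ s - δ → a t ≤ ε) ∧ ∀ t, 0 < t → 0 < a t := by
  have hs : 0 < s := hδ.trans hδs
  refine ⟨fun t => (1 - ε) * smoothRamp (s - δ) s t + ε * smoothRamp 0 s t,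
    contDiff_const.mul smoothRamp.contDiff |>.add (contDiff_const.mul smoothRamp.contDiff),
    fun t => ?_, fun t ht => ?_, fun t ht => ?_, fun t ht => ?_⟩
  · obtain ⟨h₁, h₁'⟩ := smoothRamp.mem_Icc (a := s - δ) (b := s) t
    obtain ⟨h₂, h₂'⟩ := smoothRamp.mem_Icc (a := 0) (b := s) t
    constructor <;> nlinarith
  · simp only [smoothRamp.eq_one_of_le (by linarith : s - δ < s) ht, smoothRamp.eq_one_of_le hs ht]
    ring
  · obtain ⟨-, h₂⟩ := smoothRamp.mem_Icc (a := 0) (b := s) t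
    simp only [smoothRamp.eq_zero_of_le (by linarith : s - δ < s) ht]
    nlinarith
  · nlinarith [smoothRamp.pos_of_lt hs ht, (smoothRamp.mem_Icc (a := s - δ) (b := s) t).1]

theorem exists_contDiff_eq_self_of_le {b s : ℝ} (hb : 0 < b) (hbs : b < s) :
    ∃ A : ℝ → ℝ, ContDiff ℝ (⊤ : ℕ∞) A ∧ (∀ x, s ≤ x → A x = x) ∧
      (∀ x, 0 ≤ x → b ≤ A x) ∧ ∀ x, 0 < x → 0 < deriv A x := by
  set δ := (s - b) / 2 with hδ_def
  have hδ : 0 < δ := by linarith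
  have hs : 0 < s := by linarith
  obtain ⟨a, ha, ha01, ha1, haε, hapos⟩ := exists_contDiff_pos_eq_one_of_le (s := s) (ε := δ / s) hδ
    (by linarith) (by positivity) ((div_le_one hs).2 (by linarith))
  have hint : ∀ u v : ℝ, IntervalIntegrable a MeasureTheory.volume u v :=
    ha.continuous.intervalIntegrable
  set A : ℝ → ℝ := fun x => s + ∫ t in s..x, a t with hA_def
  have hA : ∀ x, HasDerivAt A (a x) x := fun x =>
    (ha.continuous.integral_hasStrictDerivAt s x).hasDerivAt.const_add s
  have hA_mono : Monotone A := monotone_of_deriv_nonneg (fun x => (hA x).differentiableAt)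
    fun x => (hA x).deriv ▸ (ha01 x).1
  have hA_zero : b ≤ A 0 := by
    have h₁ : ∫ t in (0 : ℝ)..s - δ, a t ≤ ∫ t in (0 : ℝ)..s - δ, δ / s :=
      intervalIntegral.integral_mono_on (by linarith) (hint _ _) intervalIntegrable_const
        fun t ht => haε t ht.2
    have h₂ : ∫ t in s - δ..s, a t ≤ ∫ t in s - δ..s, (1 : ℝ) :=
      intervalIntegral.integral_mono_on (by linarith) (hint _ _) intervalIntegrable_const
        fun t _ => (ha01 t).2
    simp only [intervalIntegral.integral_const, smul_eq_mul] at h₁ h₂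
    have h₃ : (s - δ - 0) * (δ / s) ≤ δ := by
      rw [mul_div_assoc', div_le_iff₀ hs]
      nlinarith
    show b ≤ s + ∫ t in s..0, a t
    rw [intervalIntegral.integral_symm,
      ← intervalIntegral.integral_add_adjacent_intervals (hint 0 (s - δ)) (hint (s - δ) s)]
    linarith
  refine ⟨A, ?_, fun x hx => ?_, fun x hx => hA_zero.trans (hA_mono hx),
    fun x hx => (hA x).deriv ▸ hapos x hx⟩
  · rw [contDiff_infty_iff_deriv, funext fun x => (hA x).deriv]
    exact ⟨fun x => (hA x).differentiableAt, ha⟩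
  · have : ∫ t in s..x, a t = ∫ t in s..x, (1 : ℝ) :=
      intervalIntegral.integral_congr fun t ht => ha1 t (by rw [uIcc_of_le hx] at ht; exact ht.1)
    simp [hA_def, this]

theorem deriv_blend_neg {σ A u v : ℝ → ℝ} {x b u' v' : ℝ} (hσ : Differentiable ℝ σ)
    (hσm : Monotone σ) (hσ01 : ∀ y, σ y ∈ Icc 0 1) (hσb : ∀ y, b ≤ y → σ y = 1)
    (hA : Differentiable ℝ A) (hu : HasDerivAt u u' x) (hv : HasDerivAt v v' x) (hu' : u' < 0)
    (hv' : v' < 0) (hA' : 0 < deriv A (v x)) (hAb : b ≤ A (v x)) :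
    deriv (fun y => (1 - σ (u y)) * u y + σ (u y) * A (v y)) x < 0 := by
  have hσu := (hσ (u x)).hasDerivAt.comp x hu
  have hAv := (hA (v x)).hasDerivAt.comp x hv
  have hd : HasDerivAt (fun y => (1 - σ (u y)) * u y + σ (u y) * A (v y))
      ((0 - deriv σ (u x) * u') * u x + (1 - σ (u x)) * u' +
        (deriv σ (u x) * u' * A (v x) + σ (u x) * (deriv A (v x) * v'))) x :=
    (((hasDerivAt_const x 1).sub hσu).mul hu).add (hσu.mul hAv)
  rw [hd.deriv]
  -- `σ` only varies below `b`, where `u x ≤ A (v x)`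
  have hcross : 0 ≤ deriv σ (u x) * (A (v x) - u x) := by
    rcases le_or_gt (u x) b with h | h
    · exact mul_nonneg hσm.deriv_nonneg (by linarith)
    · have : σ =ᶠ[𝓝 (u x)] fun _ => 1 :=
        eventually_of_mem (Ioi_mem_nhds h) fun y hy => hσb y (le_of_lt hy)
      simp [this.deriv_eq]
  have hAv' : deriv A (v x) * v' < 0 := mul_neg_of_pos_of_neg hA' hv'
  obtain ⟨h₀, h₁⟩ := hσ01 (u x)
  nlinarith [mul_nonneg hcross (neg_nonneg.2 hu'.le), mul_nonneg h₀ (neg_nonneg.2 hAv'.le),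
    mul_nonneg (sub_nonneg.2 h₁) (neg_nonneg.2 hu'.le)]

theorem differentiableAt_slice {ρ : ℝ → ℝ → ℝ} {U : Set ℝ} (hU : IsOpen U)
    (hρ : DifferentiableOn ℝ (fun p : ℝ × ℝ => ρ p.1 p.2) (U ×ˢ univ)) {r : ℝ} (hr : r ∈ U)
    (ϑ : ℝ) : DifferentiableAt ℝ (fun r' => ρ r' ϑ) r := by
  have hρ' : DifferentiableAt ℝ (fun p : ℝ × ℝ => ρ p.1 p.2) (r, ϑ) :=
    (hρ (r, ϑ) ⟨hr, mem_univ ϑ⟩).differentiableAt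
      ((hU.prod isOpen_univ).mem_nhds ⟨hr, mem_univ ϑ⟩)
  have hslice : DifferentiableAt ℝ (fun r' : ℝ => (r', ϑ)) r :=
    differentiableAt_id.prodMk (differentiableAt_const ϑ)
  exact hρ'.comp r hslice

theorem strictAntiOn_slice {ρ : ℝ → ℝ → ℝ} {U : Set ℝ} (hU : IsOpen U) (hUc : Convex ℝ U)
    (hρ : DifferentiableOn ℝ (fun p : ℝ × ℝ => ρ p.1 p.2) (U ×ˢ univ)) (ϑ : ℝ)
    (hd : ∀ r ∈ U, deriv (fun r' => ρ r' ϑ) r < 0) : StrictAntiOn (fun r => ρ r ϑ) U :=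
  strictAntiOn_of_deriv_neg hUc
    (fun r hr => (differentiableAt_slice hU hρ hr ϑ).continuousAt.continuousWithinAt)
    (by rwa [hU.interior_eq])

theorem Function.Periodic.exists_forall_le {f : ℝ → ℝ} {c : ℝ} (hp : Function.Periodic f c)
    (hc : c ≠ 0) (hf : Continuous f) : ∃ x, ∀ y, f x ≤ f y := by
  obtain ⟨_, ⟨x, rfl⟩, hx⟩ := (hp.compact_of_continuous hc hf).exists_isLeast (range_nonempty f)
  exact ⟨x, fun y => hx ⟨y, rfl⟩⟩

theorem exists_lower_bound_below_curve {ρ : ℝ → ℝ → ℝ} {U : Set ℝ} {r₀ r₁ : ℝ → ℝ} {s₀ s₁ : ℝ}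
    (hρ : ContinuousOn (fun p : ℝ × ℝ => ρ p.1 p.2) (U ×ˢ univ))
    (hper : ∀ r ϑ, ρ r (ϑ + 1) = ρ r ϑ) (hanti : ∀ ϑ, StrictAntiOn (fun r => ρ r ϑ) U)
    (hr₀ : Continuous r₀) (hr₀per : ∀ ϑ, r₀ (ϑ + 1) = r₀ ϑ) (hr₀mem : ∀ ϑ, r₀ ϑ ∈ U)
    (hr₁mem : ∀ ϑ, r₁ ϑ ∈ U) (hrlt : ∀ ϑ, r₀ ϑ < r₁ ϑ) (hlev : ∀ ϑ, ρ (r₁ ϑ) ϑ = s₁)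
    (hs : s₁ < s₀) :
    ∃ b, s₁ < b ∧ b < s₀ ∧ ∀ ϑ, ∀ r ∈ U, r ≤ r₀ ϑ → b ≤ ρ r ϑ := by
  have hF : Continuous fun ϑ => ρ (r₀ ϑ) ϑ :=
    hρ.comp_continuous (hr₀.prodMk continuous_id) fun ϑ => ⟨hr₀mem ϑ, mem_univ ϑ⟩
  obtain ⟨ϑ₀, hϑ₀⟩ := Function.Periodic.exists_forall_le (c := 1)
    (fun ϑ => by simp only [hr₀per, hper]) one_ne_zero hF
  have hgap : s₁ < ρ (r₀ ϑ₀) ϑ₀ := hlev ϑ₀ ▸ hanti ϑ₀ (hr₀mem ϑ₀) (hr₁mem ϑ₀) (hrlt ϑ₀)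
  refine ⟨min (ρ (r₀ ϑ₀) ϑ₀) ((s₁ + s₀) / 2), lt_min hgap (by linarith),
    (min_le_right _ _).trans_lt (by linarith), fun ϑ r hr hrr₀ => ?_⟩
  refine (min_le_left _ _).trans ((hϑ₀ ϑ).trans ?_)
  exact (hanti ϑ).antitoneOn hr (hr₀mem ϑ) hrr₀

theorem stmt16_general (ε₂ : ℝ)
    (ρ₀ ρ₁ : ℝ → ℝ → ℝ)
    (hsm₀ : ContDiffOn ℝ (⊤ : ℕ∞) (fun p : ℝ × ℝ => ρ₀ p.1 p.2) (Ioo (1 - ε₂) 1 ×ˢ univ))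
    (hsm₁ : ContDiffOn ℝ (⊤ : ℕ∞) (fun p : ℝ × ℝ => ρ₁ p.1 p.2) (Ioo (1 - ε₂) 1 ×ˢ univ))
    (hper₀ : ∀ r ϑ, ρ₀ r (ϑ + 1) = ρ₀ r ϑ)
    (hper₁ : ∀ r ϑ, ρ₁ r (ϑ + 1) = ρ₁ r ϑ)
    (hpos₀ : ∀ r ∈ Ioo (1 - ε₂) 1, ∀ ϑ : ℝ, 0 < ρ₀ r ϑ)
    (hpos₁ : ∀ r ∈ Ioo (1 - ε₂) 1, ∀ ϑ : ℝ, 0 < ρ₁ r ϑ)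
    (hdec₀ : ∀ r ∈ Ioo (1 - ε₂) 1, ∀ ϑ : ℝ, deriv (fun r' => ρ₀ r' ϑ) r < 0)
    (hdec₁ : ∀ r ∈ Ioo (1 - ε₂) 1, ∀ ϑ : ℝ, deriv (fun r' => ρ₁ r' ϑ) r < 0)
    (s₀ s₁ : ℝ) (hs₁ : 0 < s₁) (hs : s₁ < s₀)
    (r₀ r₁ : ℝ → ℝ)
    (hr₀sm : ContDiff ℝ (⊤ : ℕ∞) r₀)
    (hr₀per : ∀ ϑ, r₀ (ϑ + 1) = r₀ ϑ)
    (hr₀mem : ∀ ϑ, r₀ ϑ ∈ Ioo (1 - ε₂) 1) (hr₁mem : ∀ ϑ, r₁ ϑ ∈ Ioo (1 - ε₂) 1)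
    (hrlt : ∀ ϑ, r₀ ϑ < r₁ ϑ)
    (hlev₁ : ∀ ϑ, ρ₁ (r₁ ϑ) ϑ = s₁)
    (habove₁ : ∀ ϑ : ℝ, ∀ r ∈ Ioo (1 - ε₂) 1, r₁ ϑ < r → ρ₁ r ϑ < s₁)
    (hlev₀ : ∀ ϑ, ρ₀ (r₀ ϑ) ϑ = s₀)
    (hbelow₀ : ∀ ϑ : ℝ, ∀ r ∈ Ioo (1 - ε₂) 1, r < r₀ ϑ → s₀ < ρ₀ r ϑ) :
    ∃ ρ₂ : ℝ → ℝ → ℝ,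
      ContDiffOn ℝ (⊤ : ℕ∞) (fun p : ℝ × ℝ => ρ₂ p.1 p.2) (Ioo (1 - ε₂) 1 ×ˢ univ) ∧
      (∀ r ϑ, ρ₂ r (ϑ + 1) = ρ₂ r ϑ) ∧
      (∀ r ∈ Ioo (1 - ε₂) 1, ∀ ϑ : ℝ, 0 < ρ₂ r ϑ) ∧
      (∀ r ∈ Ioo (1 - ε₂) 1, ∀ ϑ : ℝ, deriv (fun r' => ρ₂ r' ϑ) r < 0) ∧
      (∀ ϑ : ℝ, ∀ r ∈ Ioo (1 - ε₂) 1, r₁ ϑ ≤ r → ρ₂ r ϑ = ρ₁ r ϑ) ∧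
      (∀ ϑ : ℝ, ∀ r ∈ Ioo (1 - ε₂) 1, r ≤ r₀ ϑ → ρ₂ r ϑ = ρ₀ r ϑ) := by
  have hdiff₀ := hsm₀.differentiableOn (by simp)
  have hdiff₁ := hsm₁.differentiableOn (by simp)
  obtain ⟨b, hs₁b, hbs₀, hb⟩ := exists_lower_bound_below_curve hsm₁.continuousOn hper₁
    (fun ϑ => strictAntiOn_slice isOpen_Ioo (convex_Ioo _ _) hdiff₁ ϑ fun r hr => hdec₁ r hr ϑ)
    hr₀sm.continuous hr₀per hr₀mem hr₁mem hrlt hlev₁ hs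
  obtain ⟨A, hA, hA_eq, hA_ge, hA'⟩ := exists_contDiff_eq_self_of_le (hs₁.trans hs₁b) hbs₀
  refine ⟨fun r ϑ =>
      (1 - smoothRamp s₁ b (ρ₁ r ϑ)) * ρ₁ r ϑ + smoothRamp s₁ b (ρ₁ r ϑ) * A (ρ₀ r ϑ), ?_,
    fun r ϑ => by simp only [hper₀, hper₁], fun r hr ϑ => ?_, fun r hr ϑ => ?_,
    fun ϑ r hr hr₁ => ?_, fun ϑ r hr hr₀ => ?_⟩
  · exact ((contDiffOn_const.sub (smoothRamp.contDiff.comp_contDiffOn hsm₁)).mul hsm₁).add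
      ((smoothRamp.contDiff.comp_contDiffOn hsm₁).mul (hA.comp_contDiffOn hsm₀))
  · obtain ⟨h₀, h₁⟩ := smoothRamp.mem_Icc (a := s₁) (b := b) (ρ₁ r ϑ)
    exact convex_Ioi (0 : ℝ) (hpos₁ r hr ϑ) ((hs₁.trans hs₁b).trans_le (hA_ge _ (hpos₀ r hr ϑ).le))
      (sub_nonneg.2 h₁) h₀ (sub_add_cancel 1 _)
  · exact deriv_blend_neg ((smoothRamp.contDiff (n := 1)).differentiable one_ne_zero)
      (smoothRamp.monotone hs₁b) smoothRamp.mem_Icc (fun y => smoothRamp.eq_one_of_le hs₁b)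
      (hA.differentiable (by simp)) (differentiableAt_slice isOpen_Ioo hdiff₁ hr ϑ).hasDerivAt
      (differentiableAt_slice isOpen_Ioo hdiff₀ hr ϑ).hasDerivAt (hdec₁ r hr ϑ) (hdec₀ r hr ϑ)
      (hA' _ (hpos₀ r hr ϑ)) (hA_ge _ (hpos₀ r hr ϑ).le)
  · have : ρ₁ r ϑ ≤ s₁ := hr₁.eq_or_lt.elim (fun h => h ▸ (hlev₁ ϑ).le)
      fun h => (habove₁ ϑ r hr h).le
    simp [smoothRamp.eq_zero_of_le hs₁b this]
  · have : s₀ ≤ ρ₀ r ϑ := hr₀.eq_or_lt.elim (fun h => h ▸ (hlev₀ ϑ).ge)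
      fun h => (hbelow₀ ϑ r hr h).le
    simp [smoothRamp.eq_one_of_le hs₁b (hb ϑ r hr hr₀), hA_eq _ this]

/-- interpolation of radially decreasing profiles on the annulus
`A = (1−ε₂,1) × ℝ/ℤ`. -/
theorem stmt16 (ε₂ : ℝ) (hε₂ : ε₂ ∈ Ioo (0:ℝ) 1)
    (ρ₀ ρ₁ : ℝ → ℝ → ℝ)
    (hsm₀ : ContDiffOn ℝ (⊤ : ℕ∞) (fun p : ℝ × ℝ => ρ₀ p.1 p.2) (Ioo (1 - ε₂) 1 ×ˢ univ))
    (hsm₁ : ContDiffOn ℝ (⊤ : ℕ∞) (fun p : ℝ × ℝ => ρ₁ p.1 p.2) (Ioo (1 - ε₂) 1 ×ˢ univ))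
    (hper₀ : ∀ r ϑ, ρ₀ r (ϑ + 1) = ρ₀ r ϑ)
    (hper₁ : ∀ r ϑ, ρ₁ r (ϑ + 1) = ρ₁ r ϑ)
    (hpos₀ : ∀ r ∈ Ioo (1 - ε₂) 1, ∀ ϑ : ℝ, 0 < ρ₀ r ϑ)
    (hpos₁ : ∀ r ∈ Ioo (1 - ε₂) 1, ∀ ϑ : ℝ, 0 < ρ₁ r ϑ)
    (hdec₀ : ∀ r ∈ Ioo (1 - ε₂) 1, ∀ ϑ : ℝ, deriv (fun r' => ρ₀ r' ϑ) r < 0)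
    (hdec₁ : ∀ r ∈ Ioo (1 - ε₂) 1, ∀ ϑ : ℝ, deriv (fun r' => ρ₁ r' ϑ) r < 0)
    (s₀ s₁ : ℝ) (hs₁ : 0 < s₁) (hs : s₁ < s₀)
    (r₀ r₁ : ℝ → ℝ)
    (hr₀sm : ContDiff ℝ (⊤ : ℕ∞) r₀) (hr₁sm : ContDiff ℝ (⊤ : ℕ∞) r₁)
    (hr₀per : ∀ ϑ, r₀ (ϑ + 1) = r₀ ϑ) (hr₁per : ∀ ϑ, r₁ (ϑ + 1) = r₁ ϑ)
    (hr₀mem : ∀ ϑ, r₀ ϑ ∈ Ioo (1 - ε₂) 1) (hr₁mem : ∀ ϑ, r₁ ϑ ∈ Ioo (1 - ε₂) 1)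
    (hrlt : ∀ ϑ, r₀ ϑ < r₁ ϑ)
    (hlev₁ : ∀ ϑ, ρ₁ (r₁ ϑ) ϑ = s₁)
    (habove₁ : ∀ ϑ : ℝ, ∀ r ∈ Ioo (1 - ε₂) 1, r₁ ϑ < r → ρ₁ r ϑ < s₁)
    (hlev₀ : ∀ ϑ, ρ₀ (r₀ ϑ) ϑ = s₀)
    (hbelow₀ : ∀ ϑ : ℝ, ∀ r ∈ Ioo (1 - ε₂) 1, r < r₀ ϑ → s₀ < ρ₀ r ϑ) :
    ∃ ρ₂ : ℝ → ℝ → ℝ,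
      ContDiffOn ℝ (⊤ : ℕ∞) (fun p : ℝ × ℝ => ρ₂ p.1 p.2) (Ioo (1 - ε₂) 1 ×ˢ univ) ∧
      (∀ r ϑ, ρ₂ r (ϑ + 1) = ρ₂ r ϑ) ∧
      (∀ r ∈ Ioo (1 - ε₂) 1, ∀ ϑ : ℝ, 0 < ρ₂ r ϑ) ∧
      (∀ r ∈ Ioo (1 - ε₂) 1, ∀ ϑ : ℝ, deriv (fun r' => ρ₂ r' ϑ) r < 0) ∧
      (∀ ϑ : ℝ, ∀ r ∈ Ioo (1 - ε₂) 1, r₁ ϑ ≤ r → ρ₂ r ϑ = ρ₁ r ϑ) ∧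
      (∀ ϑ : ℝ, ∀ r ∈ Ioo (1 - ε₂) 1, r ≤ r₀ ϑ → ρ₂ r ϑ = ρ₀ r ϑ) :=
  stmt16_general ε₂ ρ₀ ρ₁ hsm₀ hsm₁ hper₀ hper₁ hpos₀ hpos₁ hdec₀ hdec₁ s₀ s₁ hs₁ hs r₀ r₁ hr₀sm
    hr₀per hr₀mem hr₁mem hrlt hlev₁ habove₁ hlev₀ hbelow₀
end
end
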